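/- arXiv:2603.05416 — 9 statements merged into one kernel-verified Lean document; each statement's English description precedes it below -/
import Mathlib

section
/- Let A_1 = (p_1, H_1) and A_2 = (p_2, H_2) be distinct point-hyperplane anti-flags of PG(n-1,F). Then: (1) if A_1 ~_1 A_2, the set {A_1, A_2}^{~_3} has exactly one element; (2) if A_1 ~_2 A_2, the set {A_1, A_2}^{~_3} is empty; (3) if A_1 ~_4 A_2, the set {A_1, A_2}^{~_3} has exactly two elements. -/
/-- A point-hyperplane anti-flag of `PG(n-1,F)`: a pair `(p, H)` where `p` is a point
(1-dimensional subspace of `F^n`), `H` is a hyperplane ((n-1)-dimensional subspace),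
and `p` is not contained in `H`. -/
structure AntiFlag (F : Type*) [Field F] (n : ℕ) where
  pt : Submodule F (Fin n → F)
  hyp : Submodule F (Fin n → F)
  pt_rank : Module.finrank F pt = 1
  hyp_rank : Module.finrank F hyp = n - 1
  not_incident : ¬ pt ≤ hyp

variable {F : Type*} [Field F] {n : ℕ}

/-- `A ~₁ B` : for some `j`, `p_j ⊆ H_{3-j}` and `p_{3-j} ⊄ H_j`. -/
def adj1 (A B : AntiFlag F n) : Prop :=
  A ≠ B ∧ ((A.pt ≤ B.hyp ∧ ¬ B.pt ≤ A.hyp) ∨ (B.pt ≤ A.hyp ∧ ¬ A.pt ≤ B.hyp))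

/-- `A ~₂ B` : `p_1 ⊆ H_2` and `p_2 ⊆ H_1`. -/
def adj2 (A B : AntiFlag F n) : Prop :=
  A ≠ B ∧ A.pt ≤ B.hyp ∧ B.pt ≤ A.hyp

/-- `A ~₃ B` : `p_1 = p_2` or `H_1 = H_2`. -/
def adj3 (A B : AntiFlag F n) : Prop :=
  A ≠ B ∧ (A.pt = B.pt ∨ A.hyp = B.hyp)

/-- `A ~₄ B` : `p_1 ≠ p_2`, `H_1 ≠ H_2`, `p_1 ⊄ H_2` and `p_2 ⊄ H_1`. -/
def adj4 (A B : AntiFlag F n) : Prop :=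
  A ≠ B ∧ A.pt ≠ B.pt ∧ A.hyp ≠ B.hyp ∧ ¬ A.pt ≤ B.hyp ∧ ¬ B.pt ≤ A.hyp

/-- `𝒳^{~ᵢ}` : the set of anti-flags `i`-adjacent to every anti-flag of `𝒳`. -/
def perpSet (adj : AntiFlag F n → AntiFlag F n → Prop) (X : Set (AntiFlag F n)) :
    Set (AntiFlag F n) := {B | ∀ A ∈ X, adj A B}

lemma AntiFlag.ext' {A B : AntiFlag F n} (h1 : A.pt = B.pt) (h2 : A.hyp = B.hyp) : A = B := by
  cases A; cases B; simp_all

lemma mem_perp_pair {A1 A2 B : AntiFlag F n} :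
    B ∈ perpSet adj3 {A1, A2} ↔ adj3 A1 B ∧ adj3 A2 B := by
  simp [perpSet]

/-- The `~₁` case, up to the symmetry swapping the two anti-flags. -/
lemma perp_adj1 {A1 A2 : AntiFlag F n} (h1 : A1.pt ≤ A2.hyp) (h2 : ¬ A2.pt ≤ A1.hyp) :
    perpSet adj3 {A1, A2} = {⟨A2.pt, A1.hyp, A2.pt_rank, A1.hyp_rank, h2⟩} := by
  set B0 : AntiFlag F n := ⟨A2.pt, A1.hyp, A2.pt_rank, A1.hyp_rank, h2⟩ with hB0
  have hptne : A1.pt ≠ A2.pt := fun h => A2.not_incident (h ▸ h1)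
  have hhypne : A1.hyp ≠ A2.hyp := fun h => A1.not_incident (h ▸ h1)
  ext B
  rw [mem_perp_pair, Set.mem_singleton_iff]
  constructor
  · rintro ⟨⟨hB1, hc1 | hc1⟩, ⟨hB2, hc2 | hc2⟩⟩
    · exact absurd (hc1.trans hc2.symm) hptne
    · exact absurd (hc1 ▸ hc2 ▸ h1) B.not_incident
    · exact (AntiFlag.ext' hc2.symm hc1.symm)
    · exact absurd (hc1.trans hc2.symm) hhypne
  · rintro rfl
    exact ⟨⟨fun h => hptne ((congrArg AntiFlag.pt h).trans rfl), Or.inr rfl⟩,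
      ⟨fun h => hhypne ((congrArg AntiFlag.hyp h).trans rfl).symm, Or.inl rfl⟩⟩

theorem stmt0 (hn : 3 ≤ n) (A1 A2 : AntiFlag F n) (hne : A1 ≠ A2) :
    (adj1 A1 A2 → (perpSet adj3 {A1, A2}).ncard = 1) ∧
    (adj2 A1 A2 → perpSet adj3 {A1, A2} = ∅) ∧
    (adj4 A1 A2 → (perpSet adj3 {A1, A2}).ncard = 2) := by
  have hpair : ({A1, A2} : Set (AntiFlag F n)) = {A2, A1} := Set.pair_comm _ _
  refine ⟨?_, ?_, ?_⟩
  · rintro ⟨-, ⟨h1, h2⟩ | ⟨h1, h2⟩⟩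
    · rw [perp_adj1 h1 h2]; exact Set.ncard_singleton _
    · rw [hpair, perp_adj1 h1 h2]; exact Set.ncard_singleton _
  · rintro ⟨-, h1, h2⟩
    have hptne : A1.pt ≠ A2.pt := fun h => A2.not_incident (h ▸ h1)
    have hhypne : A1.hyp ≠ A2.hyp := fun h => A1.not_incident (h ▸ h1)
    ext B
    simp only [Set.mem_empty_iff_false, iff_false]
    rw [mem_perp_pair]
    rintro ⟨⟨hB1, hc1 | hc1⟩, ⟨hB2, hc2 | hc2⟩⟩
    · exact hptne (hc1.trans hc2.symm)
    · exact B.not_incident (hc1 ▸ hc2 ▸ h1)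
    · exact B.not_incident (hc2 ▸ hc1 ▸ h2)
    · exact hhypne (hc1.trans hc2.symm)
  · rintro ⟨-, hptne, hhypne, h1, h2⟩
    set B1 : AntiFlag F n := ⟨A1.pt, A2.hyp, A1.pt_rank, A2.hyp_rank, h1⟩ with hB1d
    set B2 : AntiFlag F n := ⟨A2.pt, A1.hyp, A2.pt_rank, A1.hyp_rank, h2⟩ with hB2d
    have hset : perpSet adj3 {A1, A2} = {B1, B2} := by
      ext B
      rw [mem_perp_pair]
      constructor
      · rintro ⟨⟨hB1, hc1 | hc1⟩, ⟨hB2, hc2 | hc2⟩⟩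
        · exact absurd (hc1.trans hc2.symm) hptne
        · exact Or.inl (AntiFlag.ext' hc1.symm hc2.symm)
        · exact Or.inr (AntiFlag.ext' hc2.symm hc1.symm)
        · exact absurd (hc1.trans hc2.symm) hhypne
      · rintro (rfl | rfl)
        · exact ⟨⟨fun h => hhypne ((congrArg AntiFlag.hyp h).trans rfl), Or.inl rfl⟩,
            ⟨fun h => hptne ((congrArg AntiFlag.pt h).trans rfl).symm, Or.inr rfl⟩⟩
        · exact ⟨⟨fun h => hptne ((congrArg AntiFlag.pt h).trans rfl), Or.inr rfl⟩,
            ⟨fun h => hhypne ((congrArg AntiFlag.hyp h).trans rfl).symm, Or.inl rfl⟩⟩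
    rw [hset]
    exact Set.ncard_pair (fun h => hptne ((congrArg AntiFlag.pt h).trans rfl))
end

section
/- Let H_1, H_2, H_3 be mutually distinct hyperplanes of PG(n-1,F) with H_1 ∩ H_2 ⊄ H_3. If |F| ≥ 3 or n ≥ 4, then there exist at least two points p of PG(n-1,F) such that p ⊄ H_1, p ⊄ H_2 and p ⊄ H_3. -/
theorem stmt2 {F : Type*} [Field F] {n : ℕ} (hn : 3 ≤ n)
    (hcard : 3 ≤ Cardinal.mk F ∨ 4 ≤ n)
    (H1 H2 H3 : Submodule F (Fin n → F))
    (hH1 : Module.finrank F H1 = n - 1) (hH2 : Module.finrank F H2 = n - 1)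
    (hH3 : Module.finrank F H3 = n - 1)
    (h12 : H1 ≠ H2) (h13 : H1 ≠ H3) (h23 : H2 ≠ H3)
    (hint : ¬ H1 ⊓ H2 ≤ H3) :
    ∃ p1 p2 : Submodule F (Fin n → F), p1 ≠ p2 ∧
      Module.finrank F p1 = 1 ∧ Module.finrank F p2 = 1 ∧
      ¬ p1 ≤ H1 ∧ ¬ p1 ≤ H2 ∧ ¬ p1 ≤ H3 ∧
      ¬ p2 ≤ H1 ∧ ¬ p2 ≤ H2 ∧ ¬ p2 ≤ H3 := by
  classical
  have hVrank : Module.finrank F (Fin n → F) = n := Module.finrank_fin_fun F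
  have hn1 : n - 1 < n := Nat.sub_lt (by omega) one_pos
  have hne_top : ∀ H : Submodule F (Fin n → F),
      Module.finrank F H = n - 1 → H ≠ ⊤ := by
    intro H hH hTop
    rw [hTop] at hH
    rw [finrank_top, hVrank] at hH
    omega
  -- v ∈ H1 ⊓ H2, v ∉ H3
  obtain ⟨v, hv12, hv3⟩ := SetLike.not_le_iff_exists.mp hint
  have hv1 : v ∈ H1 := hv12.1
  have hv2 : v ∈ H2 := hv12.2
  have hvne : v ≠ 0 := fun h => hv3 (h ▸ H3.zero_mem)
  -- a vector outside H1 and H2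
  obtain ⟨a, ha⟩ : ∃ a, a ∉ H1 := by
    by_contra h
    push_neg at h
    exact hne_top H1 hH1 (Submodule.eq_top_iff'.mpr h)
  obtain ⟨b, hb⟩ : ∃ b, b ∉ H2 := by
    by_contra h
    push_neg at h
    exact hne_top H2 hH2 (Submodule.eq_top_iff'.mpr h)
  obtain ⟨w, hw1, hw2⟩ : ∃ w, w ∉ H1 ∧ w ∉ H2 := by
    by_cases ha2 : a ∈ H2
    · by_cases hb1 : b ∈ H1
      · refine ⟨a + b, fun h => ha ?_, fun h => hb ?_⟩
        · have := H1.sub_mem h hb1; simpa using this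
        · have := H2.sub_mem h ha2; simpa using this
      · exact ⟨b, hb1, hb⟩
    · exact ⟨a, ha, ha2⟩
  -- adjust to w' outside all three
  obtain ⟨w', hw'1, hw'2, hw'3⟩ : ∃ w', w' ∉ H1 ∧ w' ∉ H2 ∧ w' ∉ H3 := by
    by_cases hw3 : w ∈ H3
    · refine ⟨w + v, fun h => hw1 ?_, fun h => hw2 ?_, fun h => hv3 ?_⟩
      · have := H1.sub_mem h hv1; simpa using this
      · have := H2.sub_mem h hv2; simpa using this
      · have := H3.sub_mem h hw3; simpa using this
    · exact ⟨w, hw1, hw2, hw3⟩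
  have hw'ne : w' ≠ 0 := fun h => hw'1 (h ▸ H1.zero_mem)
  -- second vector: u ∈ H1 ⊓ H2, u ≠ 0, w' + u ∉ H3
  obtain ⟨u, hu1, hu2, hune, hu3⟩ :
      ∃ u, u ∈ H1 ∧ u ∈ H2 ∧ u ≠ 0 ∧ w' + u ∉ H3 := by
    rcases hcard with hF | hn4
    · -- |F| ≥ 3 : get x ≠ 0, x ≠ 1
      obtain ⟨x, hx0, hx1⟩ : ∃ x : F, x ≠ 0 ∧ x ≠ 1 := by
        by_contra h
        push_neg at h
        have hset : (Set.univ : Set F) = {0, 1} := by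
          ext x
          simp only [Set.mem_univ, Set.mem_insert_iff, Set.mem_singleton_iff, true_iff]
          rcases eq_or_ne x 0 with rfl | hx
          · exact Or.inl rfl
          · exact Or.inr (h x hx)
        have hle : Cardinal.mk F ≤ 2 := by
          calc Cardinal.mk F = Cardinal.mk ↑(Set.univ : Set F) := Cardinal.mk_univ.symm
            _ = Cardinal.mk ↑({0, 1} : Set F) := by rw [hset]
            _ ≤ Cardinal.mk ↑({1} : Set F) + 1 := Cardinal.mk_insert_le
            _ = 2 := by rw [Cardinal.mk_singleton]; norm_num
        have h32 : (3 : Cardinal) ≤ 2 := le_trans hF hle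
        have : (3 : ℕ) ≤ 2 := by exact_mod_cast h32
        omega
      -- one of w' + 1•v, w' + x•v is outside H3
      by_cases h1 : w' + v ∈ H3
      · refine ⟨x • v, H1.smul_mem x hv1, H2.smul_mem x hv2,
          smul_ne_zero hx0 hvne, fun h => ?_⟩
        have hsub : (x - 1) • v ∈ H3 := by
          have := H3.sub_mem h h1
          have heq : w' + x • v - (w' + v) = (x - 1) • v := by
            rw [sub_smul, one_smul]; abel
          rwa [heq] at this
        have hx1' : x - 1 ≠ 0 := sub_ne_zero.mpr hx1
        have : v ∈ H3 := by
          have := H3.smul_mem (x - 1)⁻¹ hsub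
          rwa [smul_smul, inv_mul_cancel₀ hx1', one_smul] at this
        exact hv3 this
      · exact ⟨v, hv1, hv2, hvne, by simpa using h1⟩
    · -- n ≥ 4 : H1 ⊓ H2 ⊓ H3 ≠ ⊥
      have hsup12 : Module.finrank F ↥(H1 ⊔ H2) ≤ n := by
        have := Submodule.finrank_le (H1 ⊔ H2); omega
      have heq12 := Submodule.finrank_sup_add_finrank_inf_eq H1 H2
      have h12d : n - 2 ≤ Module.finrank F ↥(H1 ⊓ H2) := by omega
      have hsup123 : Module.finrank F ↥((H1 ⊓ H2) ⊔ H3) ≤ n := by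
        have := Submodule.finrank_le ((H1 ⊓ H2) ⊔ H3); omega
      have heq123 := Submodule.finrank_sup_add_finrank_inf_eq (H1 ⊓ H2) H3
      have h123d : 1 ≤ Module.finrank F ↥(H1 ⊓ H2 ⊓ H3) := by omega
      have hne_bot : H1 ⊓ H2 ⊓ H3 ≠ ⊥ := by
        intro hb
        rw [hb, finrank_bot] at h123d
        omega
      obtain ⟨u, hu, hune⟩ := Submodule.exists_mem_ne_zero_of_ne_bot hne_bot
      refine ⟨u, hu.1.1, hu.1.2, hune, fun hmem => hw'3 ?_⟩
      have := H3.sub_mem hmem hu.2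
      simpa using this
  -- the two points
  refine ⟨Submodule.span F {w'}, Submodule.span F {w' + u}, ?_, ?_, ?_, ?_, ?_, ?_, ?_, ?_, ?_⟩
  · intro h
    have hmem : w' + u ∈ Submodule.span F {w'} := by
      rw [h]; exact Submodule.mem_span_singleton_self _
    obtain ⟨c, hc⟩ := Submodule.mem_span_singleton.mp hmem
    have hu : u = (c - 1) • w' := by
      rw [sub_smul, one_smul, hc]; abel
    rcases eq_or_ne c 1 with rfl | hc1
    · simp at hu; exact hune hu
    · have hc1' : c - 1 ≠ 0 := sub_ne_zero.mpr hc1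
      have : w' ∈ H1 := by
        have h1 : (c - 1)⁻¹ • u ∈ H1 := H1.smul_mem _ hu1
        rwa [hu, smul_smul, inv_mul_cancel₀ hc1', one_smul] at h1
      exact hw'1 this
  · exact finrank_span_singleton hw'ne
  · refine finrank_span_singleton fun h => hw'1 ?_
    have : w' + u - u ∈ H1 := H1.sub_mem (h ▸ H1.zero_mem) hu1
    simpa using this
  · exact fun h => hw'1 (h (Submodule.mem_span_singleton_self _))
  · exact fun h => hw'2 (h (Submodule.mem_span_singleton_self _))
  · exact fun h => hw'3 (h (Submodule.mem_span_singleton_self _))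
  · intro h
    have := h (Submodule.mem_span_singleton_self _)
    have : w' + u - u ∈ H1 := H1.sub_mem this hu1
    simpa using hw'1 (by simpa using this)
  · intro h
    have := h (Submodule.mem_span_singleton_self _)
    have : w' + u - u ∈ H2 := H2.sub_mem this hu2
    simpa using hw'2 (by simpa using this)
  · exact fun h => hu3 (h (Submodule.mem_span_singleton_self _))
end

section
/- Suppose |F| ≥ 3 or n ≥ 4. Let A_1 = (p_1, H_1) and A_2 = (p_2, H_2) be distinct point-hyperplane anti-flags that are not 4-adjacent. Then for every point p with p ≠ p_1 and p ≠ p_2 there exists an anti-flag (p', H') that is 4-adjacent to both A_1 and A_2 and satisfies p ⊆ H'. -/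
variable {F : Type*} [Field F] {n : ℕ}

open Module Submodule LinearMap

theorem exists_notMem_notMem_of_subsingleton {α : Type*} (hα : 3 ≤ Cardinal.mk α)
    {S T : Set α} (hS : S.Subsingleton) (hT : T.Subsingleton) : ∃ t, t ∉ S ∧ t ∉ T := by
  by_contra! h
  have hcover : (Set.univ : Set α) ⊆ S ∪ T := fun t _ => or_iff_not_imp_left.2 (h t)
  have : Cardinal.mk α ≤ 2 := calc
    Cardinal.mk α = Cardinal.mk (Set.univ : Set α) := Cardinal.mk_univ.symm
    _ ≤ Cardinal.mk ↥(S ∪ T) := Cardinal.mk_le_mk_of_subset hcover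
    _ ≤ Cardinal.mk S + Cardinal.mk T := Cardinal.mk_union_le S T
    _ ≤ 1 + 1 := add_le_add hS.cardinalMk_le_one hT.cardinalMk_le_one
    _ = 2 := one_add_one_eq_two
  exact absurd (hα.trans this) (by norm_num)

theorem Submodule.exists_mem_notMem_notMem {R M : Type*} [Ring R] [AddCommGroup M] [Module R M]
    {D W₁ W₂ : Submodule R M} (h₁ : ¬ D ≤ W₁) (h₂ : ¬ D ≤ W₂) :
    ∃ x ∈ D, x ∉ W₁ ∧ x ∉ W₂ := by
  obtain ⟨a, haD, ha₁⟩ := SetLike.not_le_iff_exists.1 h₁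
  obtain ⟨b, hbD, hb₂⟩ := SetLike.not_le_iff_exists.1 h₂
  by_cases ha₂ : a ∈ W₂
  · by_cases hb₁ : b ∈ W₁
    · exact ⟨a + b, D.add_mem haD hbD, fun h => ha₁ ((W₁.add_mem_iff_left hb₁).1 h),
        fun h => hb₂ ((W₂.add_mem_iff_right ha₂).1 h)⟩
    · exact ⟨b, hbD, hb₁, hb₂⟩
  · exact ⟨a, haD, ha₁, ha₂⟩

section Avoidance

variable {E : Type*} [AddCommGroup E] [Module F E]

theorem Submodule.subsingleton_setOf_add_smul_mem {W : Submodule F E} {u : E} (hu : u ∉ W)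
    (b : E) : {t : F | b + t • u ∈ W}.Subsingleton := by
  intro s hs t ht
  by_contra hst
  have : (s - t) • u ∈ W := by
    convert W.sub_mem hs ht using 1
    module
  exact hu ((W.smul_mem_iff (sub_ne_zero.2 hst)).1 this)

theorem Submodule.exists_dual_apply_ne_zero_le_ker {W : Submodule F E} {x : E} (hx : x ∉ W) :
    ∃ f : Dual F E, f x ≠ 0 ∧ W ≤ ker f := by
  obtain ⟨f, hfx, hW⟩ := W.exists_dual_map_eq_bot_of_notMem hx inferInstance
  exact ⟨f, hfx, LinearMap.le_ker_iff_map.2 hW⟩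

theorem Submodule.finrank_span_singleton_le_one (x : E) : finrank F (span F {x}) ≤ 1 := by
  simpa using finrank_span_le_card (R := F) ({x} : Set E)

theorem Module.Dual.notMem_span_singleton_of_apply_eq_zero {f : Dual F E} {x y : E}
    (hx : f x = 0) (hy : f y ≠ 0) : y ∉ span F {x} := by
  intro h
  obtain ⟨c, rfl⟩ := mem_span_singleton.1 h
  simp [hx] at hy

theorem Module.Dual.eq_zero_of_mem_span_singleton {f : Dual F E} {u y : E} (hu : f u ≠ 0)
    (hy : f y = 0) (h : y ∈ span F {u}) : y = 0 := by
  obtain ⟨c, rfl⟩ := mem_span_singleton.1 h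
  simp_all

theorem Module.Dual.ker_ne_ker_of_notMem_span_singleton {φ ψ : Dual F E}
    (h : φ ∉ span F {ψ}) : ker φ ≠ ker ψ := fun hker =>
  h (by simpa using mem_span_of_iInf_ker_le_ker (L := fun _ : Unit => ψ) (K := φ) (by simp [hker]))

variable [FiniteDimensional F E]

theorem Submodule.span_singleton_eq_of_mem_of_finrank_le_one {L : Submodule F E}
    (hL : finrank F L ≤ 1) {v : E} (hv0 : v ≠ 0) (hv : v ∈ L) : span F {v} = L :=
  eq_of_le_of_finrank_le ((span_singleton_le_iff_mem v L).2 hv)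
    (by rwa [finrank_span_singleton hv0])

theorem Submodule.exists_mem_ne_zero_forall_apply_eq_zero (D : Submodule F E) {k : ℕ}
    (f : Fin k → Dual F E) (hk : k < finrank F D) : ∃ y ∈ D, y ≠ 0 ∧ ∀ i, f i y = 0 := by
  obtain ⟨y, hy, hy0⟩ := (Submodule.ne_bot_iff _).1
    (ker_ne_bot_of_finrank_lt (f := (LinearMap.pi f).comp D.subtype) (by simpa using hk))
  exact ⟨y, y.2, by simpa using hy0, fun i => by simpa using congr_fun (mem_ker.1 hy) i⟩

theorem Module.Dual.finrank_le_finrank_ker_inf_ker_add_two (φ₁ φ₂ : Dual F E) :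
    finrank F E ≤ finrank F ↥(ker φ₁ ⊓ ker φ₂) + 2 := by
  rw [← LinearMap.ker_prod]
  have := (φ₁.prod φ₂).finrank_range_add_finrank_ker
  have := (LinearMap.range (φ₁.prod φ₂)).finrank_le
  simp only [finrank_prod, finrank_self] at this
  omega

theorem Submodule.exists_mem_notMem_notMem_notMem {D W₁ W₂ L : Submodule F E}
    (hD : 2 ≤ finrank F D) (hcard : 3 ≤ Cardinal.mk F ∨ 3 ≤ finrank F D) (h₁ : ¬ D ≤ W₁)
    (h₂ : ¬ D ≤ W₂) (hL : finrank F L ≤ 1) : ∃ x ∈ D, x ∉ W₁ ∧ x ∉ W₂ ∧ x ∉ L := by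
  obtain ⟨u, huD, hu₁, hu₂⟩ := exists_mem_notMem_notMem h₁ h₂
  by_cases huL : u ∉ L
  · exact ⟨u, huD, hu₁, hu₂, huL⟩
  rw [not_not] at huL
  rcases hcard with hF | hD
  · -- on the line through a point `b ∉ L` in direction `u ∈ L`, each `Wᵢ` has at most one point
    obtain ⟨b, hbD, hbL⟩ := SetLike.not_le_iff_exists.1 fun h : D ≤ L => by
      have := finrank_mono h; omega
    obtain ⟨t, ht₁, ht₂⟩ := exists_notMem_notMem_of_subsingleton hF
      (subsingleton_setOf_add_smul_mem hu₁ b) (subsingleton_setOf_add_smul_mem hu₂ b)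
    exact ⟨b + t • u, D.add_mem hbD (D.smul_mem t huD), ht₁, ht₂,
      fun h => hbL ((L.add_mem_iff_left (L.smul_mem t huL)).1 h)⟩
  · -- enlarge `Wᵢ` to hyperplanes `ker fᵢ ∌ u`; their intersection with `D` is nonzero
    obtain ⟨f₁, hf₁, hW₁⟩ := exists_dual_apply_ne_zero_le_ker hu₁
    obtain ⟨f₂, hf₂, hW₂⟩ := exists_dual_apply_ne_zero_le_ker hu₂
    obtain ⟨y, hyD, hy0, hy⟩ := D.exists_mem_ne_zero_forall_apply_eq_zero ![f₁, f₂] (by omega)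
    have hy₁ : f₁ y = 0 := hy 0
    have hy₂ : f₂ y = 0 := hy 1
    refine ⟨u + y, D.add_mem huD hyD, fun h => hf₁ ?_, fun h => hf₂ ?_, fun h => hy0 ?_⟩
    · simpa [hy₁] using hW₁ h
    · simpa [hy₂] using hW₂ h
    · have hu0 : u ≠ 0 := fun h0 => hu₁ (h0 ▸ W₁.zero_mem)
      have hyL : y ∈ L := (L.add_mem_iff_right huL).1 h
      rw [← span_singleton_eq_of_mem_of_finrank_le_one hL hu0 huL] at hyL
      exact f₁.eq_zero_of_mem_span_singleton hf₁ hy₁ hyL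

theorem Module.Dual.exists_apply_ne_zero_notMem_span_singleton (hE : 3 ≤ finrank F E)
    (hcard : 3 ≤ Cardinal.mk F ∨ 4 ≤ finrank F E) {f₁ f₂ f₃ : Dual F E} {u : E}
    (h₁ : f₁ u ≠ 0) (h₂ : f₂ u ≠ 0) (h₃ : f₃ u ≠ 0) :
    ∃ v, f₁ v ≠ 0 ∧ f₂ v ≠ 0 ∧ f₃ v ≠ 0 ∧ v ∉ span F {u} := by
  obtain ⟨y, t, hy0, hy₁, hy₂, ht, hyt⟩ : ∃ (y : E) (t : F),
      y ≠ 0 ∧ f₁ y = 0 ∧ f₂ y = 0 ∧ t ≠ 0 ∧ f₃ (y + t • u) ≠ 0 := by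
    rcases hcard with hF | hE
    · obtain ⟨y, -, hy0, hy⟩ := (⊤ : Submodule F E).exists_mem_ne_zero_forall_apply_eq_zero
        ![f₁, f₂] (by rw [finrank_top]; omega)
      obtain ⟨t, ht0, ht⟩ := exists_notMem_notMem_of_subsingleton hF Set.subsingleton_singleton
        (subsingleton_setOf_add_smul_mem (W := ker f₃) h₃ y)
      exact ⟨y, t, hy0, hy 0, hy 1, ht0, ht⟩
    · obtain ⟨y, -, hy0, hy⟩ := (⊤ : Submodule F E).exists_mem_ne_zero_forall_apply_eq_zero
        ![f₁, f₂, f₃] (by rw [finrank_top]; omega)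
      exact ⟨y, 1, hy0, hy 0, hy 1, one_ne_zero, by simpa [show f₃ y = 0 from hy 2] using h₃⟩
  refine ⟨y + t • u, by simp [hy₁, ht, h₁], by simp [hy₂, ht, h₂], hyt, fun h => hy0 ?_⟩
  exact eq_zero_of_mem_span_singleton h₁ hy₁
    (((span F {u}).add_mem_iff_left ((span F {u}).smul_mem t (mem_span_singleton_self u))).1 h)

end Avoidance

section Hyperplanes

open Dual

variable {V : Type*} [AddCommGroup V] [Module F V]

theorem not_dualAnnihilator_le_ker_eval {p : Submodule F V} {x : V} (hx : x ∉ p) :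
    ¬ p.dualAnnihilator ≤ ker (Dual.eval F V x) := by
  obtain ⟨f, hfx, hpf⟩ := exists_dual_apply_ne_zero_le_ker hx
  exact fun h => hfx (h ((mem_dualAnnihilator f).2 fun w hw => hpf hw))

variable [FiniteDimensional F V]

theorem exists_le_ker_apply_ne_zero_notMem (hV : 3 ≤ finrank F V)
    (hcard : 3 ≤ Cardinal.mk F ∨ 4 ≤ finrank F V) {p : Submodule F V} (hp : finrank F p = 1)
    {x : V} (hx : x ∉ p) {W L : Submodule F (Dual F V)} (hW : ¬ p.dualAnnihilator ≤ W)
    (hL : finrank F L ≤ 1) : ∃ φ : Dual F V, p ≤ ker φ ∧ φ x ≠ 0 ∧ φ ∉ W ∧ φ ∉ L := by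
  have hD := Subspace.finrank_add_finrank_dualAnnihilator_eq p
  obtain ⟨φ, hφp, hφx, hφW, hφL⟩ := exists_mem_notMem_notMem_notMem (by omega)
    (hcard.imp_right fun h => by omega) (not_dualAnnihilator_le_ker_eval hx) hW hL
  exact ⟨φ, fun w hw => (mem_dualAnnihilator φ).1 hφp w hw, hφx, hφW, hφL⟩

/-- `(w, ψ)` and `(v, φ)` represent 4-adjacent anti-flags `(⟨w⟩, ker ψ)` and `(⟨v⟩, ker φ)`. -/
def Adj4Rep (v : V) (φ : Dual F V) (w : V) (ψ : Dual F V) : Prop :=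
  w ∉ span F {v} ∧ ker φ ≠ ker ψ ∧ ψ v ≠ 0 ∧ φ w ≠ 0

variable {p : Submodule F V} {v₁ v₂ : V} {φ₁ φ₂ : Dual F V}

theorem exists_adj4Rep_of_span_eq (hV : 3 ≤ finrank F V)
    (hcard : 3 ≤ Cardinal.mk F ∨ 4 ≤ finrank F V) (hp : finrank F p = 1)
    (h₁ : φ₁ v₁ ≠ 0) (h₂ : φ₂ v₂ ≠ 0) (hv₁ : v₁ ∉ p)
    (h : span F {v₁} = span F {v₂}) :
    ∃ v φ, p ≤ ker φ ∧ φ v ≠ 0 ∧ Adj4Rep v₁ φ₁ v φ ∧ Adj4Rep v₂ φ₂ v φ := by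
  have hv₁₂ : v₁ ∈ span F {v₂} := h ▸ mem_span_singleton_self v₁
  have hv₂₁ : v₂ ∈ span F {v₁} := h ▸ mem_span_singleton_self v₂
  have hD : ¬ p.dualAnnihilator ≤ span F {φ₁} := fun hle => by
    have : finrank F p.dualAnnihilator ≤ finrank F (span F {φ₁}) := finrank_mono hle
    have := Subspace.finrank_add_finrank_dualAnnihilator_eq p
    have : finrank F (span F {φ₁}) ≤ 1 := finrank_span_singleton_le_one φ₁
    omega
  obtain ⟨φ, hpφ, hφ₁, hφφ₁, hφφ₂⟩ :=
    exists_le_ker_apply_ne_zero_notMem hV hcard hp hv₁ hD (finrank_span_singleton_le_one φ₂)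
  have h₂₁ : φ₂ v₁ ≠ 0 := fun h0 => notMem_span_singleton_of_apply_eq_zero h0 h₂ hv₂₁
  have hφ₂ : φ v₂ ≠ 0 := fun h0 => notMem_span_singleton_of_apply_eq_zero h0 hφ₁ hv₁₂
  obtain ⟨v, hv₁, hv₂, hvφ, hvs⟩ := exists_apply_ne_zero_notMem_span_singleton hV hcard h₁ h₂₁ hφ₁
  exact ⟨v, φ, hpφ, hvφ, ⟨hvs, (ker_ne_ker_of_notMem_span_singleton hφφ₁).symm, hφ₁, hv₁⟩,
    ⟨h ▸ hvs, (ker_ne_ker_of_notMem_span_singleton hφφ₂).symm, hφ₂, hv₂⟩⟩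

theorem exists_adj4Rep_of_ker_eq (hV : 3 ≤ finrank F V)
    (hcard : 3 ≤ Cardinal.mk F ∨ 4 ≤ finrank F V) (hp : finrank F p = 1)
    (h₁ : φ₁ v₁ ≠ 0) (hv₁ : v₁ ∉ p) (hv₂ : v₂ ∉ p)
    (hker : ker φ₁ = ker φ₂) (hv : v₁ ∉ span F {v₂}) :
    ∃ v φ, p ≤ ker φ ∧ φ v ≠ 0 ∧ Adj4Rep v₁ φ₁ v φ ∧ Adj4Rep v₂ φ₂ v φ := by
  obtain ⟨φ, hpφ, hφ₁, hφ₂, hφφ₁⟩ := exists_le_ker_apply_ne_zero_notMem hV hcard hp hv₁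
    (not_dualAnnihilator_le_ker_eval hv₂) (finrank_span_singleton_le_one φ₁)
  replace hφ₂ : φ v₂ ≠ 0 := by simpa using hφ₂
  have hker₁ := (ker_ne_ker_of_notMem_span_singleton hφφ₁).symm
  -- a hyperplane `ker ψ` through `v₂` but not `v₁` keeps `v` off the point `⟨v₂⟩`
  obtain ⟨ψ, hψ₁, hψ₂⟩ := exists_dual_apply_ne_zero_le_ker hv
  obtain ⟨v, hv₁, hvφ, hvψ, hvs⟩ := exists_apply_ne_zero_notMem_span_singleton hV hcard h₁ hφ₁ hψ₁
  exact ⟨v, φ, hpφ, hvφ, ⟨hvs, hker₁, hφ₁, hv₁⟩,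
    ⟨notMem_span_singleton_of_apply_eq_zero (hψ₂ (mem_span_singleton_self v₂)) hvψ, hker ▸ hker₁,
      hφ₂, fun h0 => hv₁ (by rwa [← mem_ker, hker, mem_ker])⟩⟩

theorem exists_adj4Rep_of_apply_eq_zero (hV : 3 ≤ finrank F V)
    (hcard : 3 ≤ Cardinal.mk F ∨ 4 ≤ finrank F V) (hp : finrank F p = 1)
    (h₂ : φ₂ v₂ ≠ 0) (hv₁ : v₁ ∉ p) (hv₂ : v₂ ∉ p) (h₂₁ : φ₂ v₁ = 0) (h₁₂ : φ₁ v₂ ≠ 0) :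
    ∃ v φ, p ≤ ker φ ∧ φ v ≠ 0 ∧ Adj4Rep v₁ φ₁ v φ ∧ Adj4Rep v₂ φ₂ v φ := by
  obtain ⟨φ, hpφ, hφ₁, hφ₂, hφφ₁⟩ := exists_le_ker_apply_ne_zero_notMem hV hcard hp hv₁
    (not_dualAnnihilator_le_ker_eval hv₂) (finrank_span_singleton_le_one φ₁)
  replace hφ₂ : φ v₂ ≠ 0 := by simpa using hφ₂
  have hker₂ : ker φ₂ ≠ ker φ := fun h => hφ₁ (by rwa [← mem_ker, ← h, mem_ker])
  obtain ⟨v, hv₁, hv₂, hvφ, hvs⟩ := exists_apply_ne_zero_notMem_span_singleton hV hcard h₁₂ h₂ hφ₂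
  exact ⟨v, φ, hpφ, hvφ,
    ⟨notMem_span_singleton_of_apply_eq_zero h₂₁ hv₂,
      (ker_ne_ker_of_notMem_span_singleton hφφ₁).symm, hφ₁, hv₁⟩, ⟨hvs, hker₂, hφ₂, hv₂⟩⟩

theorem exists_adj4Rep_of_apply_eq_zero_of_apply_eq_zero (hV : 3 ≤ finrank F V)
    (hcard : 3 ≤ Cardinal.mk F ∨ 4 ≤ finrank F V) (hp : finrank F p = 1)
    (h₁ : φ₁ v₁ ≠ 0) (h₂ : φ₂ v₂ ≠ 0) (hv₁ : v₁ ∉ p) (hv₂ : v₂ ∉ p) (h₂₁ : φ₂ v₁ = 0)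
    (h₁₂ : φ₁ v₂ = 0) :
    ∃ v φ, p ≤ ker φ ∧ φ v ≠ 0 ∧ Adj4Rep v₁ φ₁ v φ ∧ Adj4Rep v₂ φ₂ v φ := by
  set K := ker φ₁ ⊓ ker φ₂
  set M := K ⊔ span F {v₁ + v₂}
  have hM : finrank F M.dualAnnihilator ≤ 1 := by
    have hlt : K < M := lt_of_le_of_ne le_sup_left fun h => h₁ <| by
      have : v₁ + v₂ ∈ K := by rw [h]; exact mem_sup_right (mem_span_singleton_self _)
      simpa [K, h₁₂] using (mem_inf.1 this).1
    have := finrank_lt_finrank_of_lt hlt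
    have : finrank F V ≤ finrank F K + 2 := finrank_le_finrank_ker_inf_ker_add_two φ₁ φ₂
    have := Subspace.finrank_add_finrank_dualAnnihilator_eq M
    omega
  -- avoiding the line `M.dualAnnihilator`, `φ` does not vanish on all of `v₁ + v₂ + K`
  obtain ⟨φ, hpφ, hφ₁, hφ₂, hφM⟩ := exists_le_ker_apply_ne_zero_notMem hV hcard hp hv₁
    (not_dualAnnihilator_le_ker_eval hv₂) hM
  replace hφ₂ : φ v₂ ≠ 0 := by simpa using hφ₂
  obtain ⟨x, hxK, hx⟩ : ∃ x ∈ K, φ (v₁ + v₂ + x) ≠ 0 := by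
    by_contra! h
    have h0 : φ (v₁ + v₂) = 0 := by simpa using h 0 K.zero_mem
    refine hφM ((mem_dualAnnihilator φ).2 fun m hm => ?_)
    obtain ⟨y, hy, z, hz, rfl⟩ := mem_sup.1 hm
    obtain ⟨c, rfl⟩ := mem_span_singleton.1 hz
    have hy0 := h y hy
    rw [map_add, h0, zero_add] at hy0
    rw [map_add, map_smul, h0, smul_zero, add_zero, hy0]
  obtain ⟨hx₁, hx₂⟩ := mem_inf.1 hxK
  replace hx₁ : φ₁ (v₁ + v₂ + x) ≠ 0 := by simpa [h₁₂, mem_ker.1 hx₁] using h₁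
  replace hx₂ : φ₂ (v₁ + v₂ + x) ≠ 0 := by simpa [h₂₁, mem_ker.1 hx₂] using h₂
  exact ⟨v₁ + v₂ + x, φ, hpφ, hx,
    ⟨notMem_span_singleton_of_apply_eq_zero h₂₁ hx₂,
      fun h => hφ₂ (by rwa [← mem_ker, ← h, mem_ker]), hφ₁, hx₁⟩,
    ⟨notMem_span_singleton_of_apply_eq_zero h₁₂ hx₁,
      fun h => hφ₁ (by rwa [← mem_ker, ← h, mem_ker]), hφ₂, hx₂⟩⟩

theorem exists_adj4Rep_adj4Rep (hV : 3 ≤ finrank F V)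
    (hcard : 3 ≤ Cardinal.mk F ∨ 4 ≤ finrank F V) (hp : finrank F p = 1)
    (h₁ : φ₁ v₁ ≠ 0) (h₂ : φ₂ v₂ ≠ 0) (hv₁ : v₁ ∉ p) (hv₂ : v₂ ∉ p)
    (h : span F {v₁} = span F {v₂} ∨ ker φ₁ = ker φ₂ ∨ φ₂ v₁ = 0 ∨ φ₁ v₂ = 0) :
    ∃ v φ, p ≤ ker φ ∧ φ v ≠ 0 ∧ Adj4Rep v₁ φ₁ v φ ∧ Adj4Rep v₂ φ₂ v φ := by
  by_cases hs : span F {v₁} = span F {v₂}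
  · exact exists_adj4Rep_of_span_eq hV hcard hp h₁ h₂ hv₁ hs
  have hv : v₁ ∉ span F {v₂} := fun hm => hs <|
    span_singleton_eq_of_mem_of_finrank_le_one (finrank_span_singleton_le_one v₂)
      (ne_zero_of_map h₁) hm
  rcases h with h | h | h₂₁ | h₁₂
  · exact absurd h hs
  · exact exists_adj4Rep_of_ker_eq hV hcard hp h₁ hv₁ hv₂ h hv
  · by_cases h₁₂ : φ₁ v₂ = 0
    · exact exists_adj4Rep_of_apply_eq_zero_of_apply_eq_zero hV hcard hp h₁ h₂ hv₁ hv₂ h₂₁ h₁₂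
    · exact exists_adj4Rep_of_apply_eq_zero hV hcard hp h₂ hv₁ hv₂ h₂₁ h₁₂
  · by_cases h₂₁ : φ₂ v₁ = 0
    · exact exists_adj4Rep_of_apply_eq_zero_of_apply_eq_zero hV hcard hp h₁ h₂ hv₁ hv₂ h₂₁ h₁₂
    · obtain ⟨v, φ, hpφ, hφv, hr₂, hr₁⟩ :=
        exists_adj4Rep_of_apply_eq_zero hV hcard hp h₁ hv₂ hv₁ h₁₂ h₂₁
      exact ⟨v, φ, hpφ, hφv, hr₁, hr₂⟩

end Hyperplanes

namespace AntiFlag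

theorem exists_eq_span_ker (A : AntiFlag F n) :
    ∃ (v : Fin n → F) (φ : Dual F (Fin n → F)), A.pt = span F {v} ∧ A.hyp = ker φ ∧ φ v ≠ 0 := by
  obtain ⟨v, hvA, hv0⟩ := (Submodule.ne_bot_iff A.pt).1 (one_le_finrank_iff.1 A.pt_rank.ge)
  have hv := (span_singleton_eq_of_mem_of_finrank_le_one A.pt_rank.le hv0 hvA).symm
  obtain ⟨φ, hφv, hHφ⟩ := exists_dual_apply_ne_zero_le_ker fun h =>
    A.not_incident (hv ▸ (span_singleton_le_iff_mem v A.hyp).2 h)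
  refine ⟨v, φ, hv, eq_of_le_of_finrank_eq hHφ ?_, hφv⟩
  have hker := φ.finrank_ker_add_one_of_ne_zero fun h => hφv (by simp [h])
  rw [finrank_fin_fun] at hker
  rw [A.hyp_rank]
  omega

def ofApplyNeZero {v : Fin n → F} {φ : Dual F (Fin n → F)} (h : φ v ≠ 0) : AntiFlag F n where
  pt := span F {v}
  hyp := ker φ
  pt_rank := finrank_span_singleton (ne_zero_of_map h)
  hyp_rank := by
    have := φ.finrank_ker_add_one_of_ne_zero fun hφ => h (by simp [hφ])
    rw [finrank_fin_fun] at this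
    omega
  not_incident := by simpa [span_singleton_le_iff_mem] using h

end AntiFlag

section

variable {A B : AntiFlag F n} {v w : Fin n → F} {φ ψ : Dual F (Fin n → F)}

theorem adj4_iff_of_eq_span_ker (hvA : A.pt = span F {v}) (hφA : A.hyp = ker φ)
    (hwB : B.pt = span F {w}) (hψB : B.hyp = ker ψ) :
    adj4 A B ↔ span F {v} ≠ span F {w} ∧ ker φ ≠ ker ψ ∧ ψ v ≠ 0 ∧ φ w ≠ 0 := by
  have hAB : span F {v} ≠ span F {w} → A ≠ B := fun h hAB => h (by rw [← hvA, ← hwB, hAB])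
  simp only [adj4, hvA, hφA, hwB, hψB, span_singleton_le_iff_mem, mem_ker]
  exact ⟨fun h => h.2, fun h => ⟨hAB h.1, h⟩⟩

theorem adj4_ofApplyNeZero (hvA : A.pt = span F {v}) (hφA : A.hyp = ker φ) (h : ψ w ≠ 0)
    (hr : Adj4Rep v φ w ψ) : adj4 A (.ofApplyNeZero h) :=
  (adj4_iff_of_eq_span_ker hvA hφA rfl rfl).2
    ⟨fun he => hr.1 (he ▸ mem_span_singleton_self w), hr.2⟩

end

theorem stmt4_general (hn : 3 ≤ n) (hcard : 3 ≤ Cardinal.mk F ∨ 4 ≤ n)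
    (A1 A2 : AntiFlag F n) (hnot4 : ¬ adj4 A1 A2)
    (p : Submodule F (Fin n → F)) (hp : Module.finrank F p = 1)
    (hp1 : p ≠ A1.pt) (hp2 : p ≠ A2.pt) :
    ∃ B : AntiFlag F n, adj4 A1 B ∧ adj4 A2 B ∧ p ≤ B.hyp := by
  have hV : finrank F (Fin n → F) = n := finrank_fin_fun F
  obtain ⟨v₁, φ₁, hA₁, hH₁, h₁⟩ := A1.exists_eq_span_ker
  obtain ⟨v₂, φ₂, hA₂, hH₂, h₂⟩ := A2.exists_eq_span_ker
  have hv₁ : v₁ ∉ p := fun h => hp1 <| by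
    rw [hA₁, span_singleton_eq_of_mem_of_finrank_le_one hp.le (ne_zero_of_map h₁) h]
  have hv₂ : v₂ ∉ p := fun h => hp2 <| by
    rw [hA₂, span_singleton_eq_of_mem_of_finrank_le_one hp.le (ne_zero_of_map h₂) h]
  rw [adj4_iff_of_eq_span_ker hA₁ hH₁ hA₂ hH₂] at hnot4
  obtain ⟨v, φ, hpφ, hφv, hr₁, hr₂⟩ :=
    exists_adj4Rep_adj4Rep (by rwa [hV]) (by rwa [hV]) hp h₁ h₂ hv₁ hv₂ (by tauto)
  exact ⟨.ofApplyNeZero hφv, adj4_ofApplyNeZero hA₁ hH₁ hφv hr₁,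
    adj4_ofApplyNeZero hA₂ hH₂ hφv hr₂, hpφ⟩

theorem stmt4 (hn : 3 ≤ n) (hcard : 3 ≤ Cardinal.mk F ∨ 4 ≤ n)
    (A1 A2 : AntiFlag F n) (hne : A1 ≠ A2) (hnot4 : ¬ adj4 A1 A2)
    (p : Submodule F (Fin n → F)) (hp : Module.finrank F p = 1)
    (hp1 : p ≠ A1.pt) (hp2 : p ≠ A2.pt) :
    ∃ B : AntiFlag F n, adj4 A1 B ∧ adj4 A2 B ∧ p ≤ B.hyp :=
  stmt4_general hn hcard A1 A2 hnot4 p hp hp1 hp2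
end

section
/- Suppose |F| ≥ 3 or n ≥ 4. Let A_1 = (p_1, H_1) and A_2 = (p_2, H_2) be distinct point-hyperplane anti-flags that are not 4-adjacent. Then for every hyperplane H with H ≠ H_1 and H ≠ H_2 there exists an anti-flag (p'', H'') that is 4-adjacent to both A_1 and A_2 and satisfies p'' ⊆ H. -/
variable {F : Type*} [Field F] {n : ℕ}

/-!
The point is chosen first. Not being 4-adjacent means `p₁ = p₂`, `H₁ = H₂`, `p₁ ⊆ H₂` or
`p₂ ⊆ H₁`, so one of the subspaces `H₁, H₂, p₁, p₂` is redundant and a point `w ∈ H` only has to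
avoid three proper subspaces of `H`; this is possible when `|F| ≥ 3`. For `n ≥ 4` a dimension count
gives `H ∩ H₁ ∩ H₂ ⊄ p₁ + p₂`, and then `w` can even be taken outside `p₁ + p₂`.

The hyperplane is the kernel of a functional `φ` with `φ v₁ = 1`, `φ v₂ ≠ 0`, `φ w ≠ 0`, where
`pᵢ = ⟨vᵢ⟩`; so normalized, distinct functionals have distinct kernels. Unless `p₁ = p₂`, at most
one of `H₁, H₂` misses both `v₁` and `v₂`, so two such functionals suffice (three if `p₁ = p₂`);
they are obtained from one of them by adding functionals that vanish at the relevant vectors.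
-/

open Module Submodule LinearMap Cardinal

namespace Submodule

variable {K V : Type*} [DivisionRing K] [AddCommGroup V] [Module K V]
  {U W₁ W₂ W₃ : Submodule K V}

theorem exists_mem_notMem_notMem_s5 (h₁ : ¬U ≤ W₁) (h₂ : ¬U ≤ W₂) : ∃ x ∈ U, x ∉ W₁ ∧ x ∉ W₂ := by
  have : ¬(U : Set V) ⊆ W₁ ∪ W₂ := by
    rw [AddSubgroupClass.subset_union]
    tauto
  obtain ⟨x, hxU, hx⟩ := Set.not_subset.1 this
  exact ⟨x, hxU, fun h => hx (Or.inl h), fun h => hx (Or.inr h)⟩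

theorem exists_forall_add_smul_mem_imp_eq {W : Submodule K V} {a : V} (ha : a ∉ W) (b : V) :
    ∃ s : K, ∀ t : K, b + t • a ∈ W → t = s := by
  by_cases h : ∃ s : K, b + s • a ∈ W
  · obtain ⟨s, hs⟩ := h
    refine ⟨s, fun t ht => ?_⟩
    by_contra hts
    have : (t - s) • a ∈ W := by simpa [sub_smul] using sub_mem ht hs
    exact ha ((W.smul_mem_iff (sub_ne_zero.2 hts)).1 this)
  · simp only [not_exists] at h
    exact ⟨0, fun t ht => absurd ht (h t)⟩

theorem exists_mem_notMem₃ (h₁ : ¬U ≤ W₁) (h₂ : ¬U ≤ W₂) (h₃ : ¬U ≤ W₃)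
    (h : 3 ≤ #K ∨ ¬U ⊓ W₁ ⊓ W₂ ≤ W₃) : ∃ x ∈ U, x ∉ W₁ ∧ x ∉ W₂ ∧ x ∉ W₃ := by
  obtain ⟨a, haU, ha₁, ha₂⟩ := exists_mem_notMem_notMem_s5 h₁ h₂
  by_cases ha₃ : a ∈ W₃
  swap
  · exact ⟨a, haU, ha₁, ha₂, ha₃⟩
  rcases h with hK | h
  · -- the line `b + t • a` never meets `W₃`, and meets each of `W₁`, `W₂` at most once
    obtain ⟨b, hbU, hb₃⟩ := SetLike.not_le_iff_exists.1 h₃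
    obtain ⟨s₁, hs₁⟩ := exists_forall_add_smul_mem_imp_eq ha₁ b
    obtain ⟨s₂, hs₂⟩ := exists_forall_add_smul_mem_imp_eq ha₂ b
    obtain ⟨t, ht₁, ht₂⟩ := exists_ne_ne_of_three_le hK s₁ s₂
    exact ⟨b + t • a, add_mem hbU (U.smul_mem t haU), fun h => ht₁ (hs₁ t h),
      fun h => ht₂ (hs₂ t h), by rwa [W₃.add_mem_iff_left (W₃.smul_mem t ha₃)]⟩
  · obtain ⟨b, ⟨⟨hbU, hb₁⟩, hb₂⟩, hb₃⟩ := SetLike.not_le_iff_exists.1 h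
    exact ⟨a + b, add_mem haU hbU, by rwa [W₁.add_mem_iff_left hb₁],
      by rwa [W₂.add_mem_iff_left hb₂], by rwa [W₃.add_mem_iff_right ha₃]⟩

theorem finrank_add_finrank_le_finrank_inf_add [FiniteDimensional K V] (s t : Submodule K V) :
    finrank K s + finrank K t ≤ finrank K ↥(s ⊓ t) + finrank K V := by
  have := finrank_sup_add_finrank_inf_eq s t
  have := (s ⊔ t).finrank_le
  omega

theorem finrank_span_pair_le (u v : V) : finrank K (span K {u, v}) ≤ 2 := by
  classical
  have := finrank_span_le_card (R := K) ({u, v} : Set V)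
  simp only [Set.toFinset_insert, Set.toFinset_singleton] at this
  exact this.trans Finset.card_le_two

theorem finrank_span_triple_le (u v w : V) : finrank K (span K {u, v, w}) ≤ 3 := by
  classical
  have := finrank_span_le_card (R := K) ({u, v, w} : Set V)
  simp only [Set.toFinset_insert, Set.toFinset_singleton] at this
  exact this.trans Finset.card_le_three

end Submodule

theorem disjoint_sup_inf_of_le {α : Type*} [Lattice α] [OrderBot α] [IsModularLattice α]
    {p₁ p₂ H₁ H₂ : α} (h₁ : Disjoint p₁ H₁) (h₂ : Disjoint p₂ H₂) (h : p₁ ≤ H₂) :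
    Disjoint ((p₁ ⊔ p₂) ⊓ H₂) H₁ := by
  rwa [sup_inf_assoc_of_le p₂ h, h₂.eq_bot, sup_bot_eq]

theorem exists_ne_zero_add_mul_ne_zero {K : Type*} [Field K] (hK : 3 ≤ #K) {a : K}
    (ha : a ≠ 0) (b : K) : ∃ s : K, s ≠ 0 ∧ a + s * b ≠ 0 := by
  obtain ⟨s, hs₀, hs⟩ := exists_ne_ne_of_three_le hK 0 (-a / b)
  refine ⟨s, hs₀, fun h => ?_⟩
  rcases eq_or_ne b 0 with rfl | hb
  · simp [ha] at h
  · exact hs (by rw [eq_div_iff hb]; linear_combination h)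

namespace Module.Dual

variable {K V : Type*} [Field K] [AddCommGroup V] [Module K V]

theorem eq_of_ker_eq {φ ψ : Dual K V} {u : V} (hφ : φ u = 1) (hψ : ψ u = 1)
    (h : ker φ = ker ψ) : φ = ψ := by
  ext x
  have : x - φ x • u ∈ ker ψ := h ▸ by simp [hφ]
  rw [mem_ker, map_sub, map_smul, hψ, smul_eq_mul, mul_one, sub_eq_zero] at this
  exact this.symm

theorem exists_mem_ker_notMem {s : Set (Dual K V)} {u : V} (hs : ∀ φ ∈ s, φ u = 1)
    {B : Set (Submodule K V)} (hB : B.encard < s.encard) : ∃ φ ∈ s, ker φ ∉ B := by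
  by_contra! h
  obtain ⟨φ, hφ, ψ, hψ, hne, heq⟩ := Set.exists_ne_map_eq_of_encard_lt_of_maps_to hB h
  exact hne (eq_of_ker_eq (hs φ hφ) (hs ψ hψ) heq)

variable [FiniteDimensional K V]

theorem exists_ne_zero_le_ker {S : Submodule K V} (hS : finrank K S < finrank K V) :
    ∃ e : Dual K V, e ≠ 0 ∧ S ≤ ker e := by
  obtain ⟨e, he, hSe⟩ := S.exists_dual_map_eq_bot_of_lt_top (lt_top_of_finrank_lt_finrank hS)
    inferInstance
  exact ⟨e, he, LinearMap.le_ker_iff_map.2 hSe⟩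

theorem exists_ne_ne_zero_le_ker {S : Submodule K V}
    (h : 3 ≤ #K ∧ finrank K S < finrank K V ∨ finrank K S + 2 ≤ finrank K V) :
    ∃ e₁ e₂ : Dual K V, e₁ ≠ 0 ∧ e₂ ≠ 0 ∧ e₁ ≠ e₂ ∧ S ≤ ker e₁ ∧ S ≤ ker e₂ := by
  rcases h with ⟨hK, hS⟩ | hS
  · obtain ⟨e, he, hSe⟩ := exists_ne_zero_le_ker hS
    obtain ⟨c, hc₀, hc₁⟩ := exists_ne_ne_of_three_le hK 0 1
    refine ⟨e, c • e, he, smul_ne_zero hc₀ he, fun h => hc₁ ?_, hSe,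
      (ker_smul e c hc₀).ge.trans' hSe⟩
    exact smul_left_injective K he (by simpa using h.symm)
  · obtain ⟨x, -, hx⟩ :=
      SetLike.exists_of_lt (lt_top_of_finrank_lt_finrank (by omega : finrank K S < finrank K V))
    obtain ⟨e₁, he₁, hSe₁⟩ := exists_le_ker_of_notMem hx
    have hx₀ : x ≠ 0 := fun h => hx (h ▸ S.zero_mem)
    obtain ⟨e₂, he₂, hSe₂⟩ := exists_ne_zero_le_ker (S := S ⊔ span K {x}) (by
      have := finrank_add_le_finrank_add_finrank S (span K {x})
      rw [finrank_span_singleton hx₀] at this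
      omega)
    have he₂x : e₂ x = 0 := hSe₂ (mem_sup_right (mem_span_singleton_self x))
    exact ⟨e₁, e₂, fun h => he₁ (by simp [h]), he₂, fun h => he₁ (h ▸ he₂x), hSe₁,
      le_sup_left.trans hSe₂⟩

end Module.Dual

section NonvanishingDuals

variable {K V : Type*} [Field K] [AddCommGroup V] [Module K V]

-- Normalized at `v₁`, so that an element is determined by its kernel (`Dual.eq_of_ker_eq`).
def nonvanishingDuals (v₁ v₂ w : V) : Set (Dual K V) := {φ | φ v₁ = 1 ∧ φ v₂ ≠ 0 ∧ φ w ≠ 0}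

variable {v₁ v₂ w : V}

theorem add_mem_nonvanishingDuals {φ e : Dual K V} (hφ : φ ∈ nonvanishingDuals v₁ v₂ w)
    (h₁ : e v₁ = 0) (h₂ : e v₂ = 0) (h₃ : e w = 0) : φ + e ∈ nonvanishingDuals v₁ v₂ w := by
  simpa [nonvanishingDuals, h₁, h₂, h₃] using hφ

theorem nonvanishingDuals_nonempty (hv₁ : v₁ ≠ 0) (hv₂ : v₂ ≠ 0) (hw : w ≠ 0)
    (h : 3 ≤ #K ∨ w ∉ span K {v₁, v₂}) :
    (nonvanishingDuals v₁ v₂ w : Set (Dual K V)).Nonempty := by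
  -- `φ` has to avoid the annihilators of `v₁`, `v₂`, `w`, which form no pencil if `w ∉ ⟨v₁, v₂⟩`
  have hev : ∀ x : V, x ≠ 0 → ¬(⊤ : Submodule K (Dual K V)) ≤ ker (Dual.eval K V x) := by
    intro x hx hle
    refine hx ((forall_dual_apply_eq_zero_iff K x).1 fun φ => ?_)
    simpa using hle (mem_top (x := φ))
  have hpencil : w ∉ span K {v₁, v₂} →
      ¬⊤ ⊓ ker (Dual.eval K V v₁) ⊓ ker (Dual.eval K V v₂) ≤ ker (Dual.eval K V w) := by
    intro hw' hle
    obtain ⟨e, hew, hSe⟩ := exists_le_ker_of_notMem hw'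
    have h₁ : e v₁ = 0 := hSe (subset_span (by simp))
    have h₂ : e v₂ = 0 := hSe (subset_span (by simp))
    exact hew (by simpa using hle (x := e) ⟨⟨mem_top, by simpa using h₁⟩, by simpa using h₂⟩)
  obtain ⟨φ, -, h₁, h₂, h₃⟩ :=
    exists_mem_notMem₃ (hev v₁ hv₁) (hev v₂ hv₂) (hev w hw) (h.imp_right hpencil)
  simp only [mem_ker, Dual.eval_apply] at h₁ h₂ h₃
  exact ⟨(φ v₁)⁻¹ • φ, by simp [nonvanishingDuals, h₁, h₂, h₃]⟩

variable [FiniteDimensional K V]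

theorem one_lt_encard_nonvanishingDuals (hV : 3 ≤ finrank K V) (hv₁ : v₁ ≠ 0) (hv₂ : v₂ ≠ 0)
    (hw : w ≠ 0) (h : 3 ≤ #K ∨ 4 ≤ finrank K V ∧ w ∉ span K {v₁, v₂}) :
    1 < (nonvanishingDuals v₁ v₂ w : Set (Dual K V)).encard := by
  obtain ⟨φ, hφ⟩ := nonvanishingDuals_nonempty hv₁ hv₂ hw (h.imp_right And.right)
  obtain ⟨e, he, hφe⟩ : ∃ e ≠ 0, φ + e ∈ nonvanishingDuals v₁ v₂ w := by
    rcases h with hK | ⟨hV4, -⟩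
    · obtain ⟨e, he, hSe⟩ := Dual.exists_ne_zero_le_ker (S := span K {v₁, v₂})
        (by have := finrank_span_pair_le (K := K) v₁ v₂; omega)
      obtain ⟨s, hs, hsw⟩ := exists_ne_zero_add_mul_ne_zero hK hφ.2.2 (e w)
      have h₁ : e v₁ = 0 := hSe (subset_span (by simp))
      have h₂ : e v₂ = 0 := hSe (subset_span (by simp))
      exact ⟨s • e, smul_ne_zero hs he, by simp [hφ.1, h₁], by simp [hφ.2.1, h₂],
        by simpa using hsw⟩
    · obtain ⟨e, he, hSe⟩ := Dual.exists_ne_zero_le_ker (S := span K {v₁, v₂, w})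
        (by have := finrank_span_triple_le (K := K) v₁ v₂ w; omega)
      exact ⟨e, he, add_mem_nonvanishingDuals hφ (hSe (subset_span (by simp)))
        (hSe (subset_span (by simp))) (hSe (subset_span (by simp)))⟩
  exact Set.one_lt_encard_iff.2 ⟨φ, φ + e, hφ, hφe, by simpa using he⟩

theorem two_lt_encard_nonvanishingDuals (hV : 3 ≤ finrank K V) (hv₁ : v₁ ≠ 0) (hv₂ : v₂ ≠ 0)
    (hw : w ≠ 0) (hv₁₂ : v₂ ∈ span K {v₁})
    (h : 3 ≤ #K ∨ 4 ≤ finrank K V ∧ w ∉ span K {v₁, v₂}) :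
    2 < (nonvanishingDuals v₁ v₂ w : Set (Dual K V)).encard := by
  obtain ⟨φ, hφ⟩ := nonvanishingDuals_nonempty hv₁ hv₂ hw (h.imp_right And.right)
  have hS : finrank K (span K {v₁, w}) ≤ 2 := finrank_span_pair_le v₁ w
  obtain ⟨e₁, e₂, he₁, he₂, he₁₂, hS₁, hS₂⟩ :=
    Dual.exists_ne_ne_zero_le_ker (S := span K {v₁, w})
      (h.imp (fun hK => ⟨hK, by omega⟩) (fun h => by omega))
  have hmem : ∀ e : Dual K V, span K {v₁, w} ≤ ker e → φ + e ∈ nonvanishingDuals v₁ v₂ w :=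
    fun e hSe => add_mem_nonvanishingDuals hφ (hSe (subset_span (by simp)))
      (hSe (span_mono (by simp) hv₁₂)) (hSe (subset_span (by simp)))
  have hthree : ({φ, φ + e₁, φ + e₂} : Set (Dual K V)).encard = 3 :=
    Set.encard_eq_three.2 ⟨_, _, _, by simpa using he₁, by simpa using he₂,
      by simpa using he₁₂, rfl⟩
  calc (2 : ℕ∞) < 3 := by norm_num
    _ = ({φ, φ + e₁, φ + e₂} : Set (Dual K V)).encard := hthree.symm
    _ ≤ _ := Set.encard_le_encard (by
      rintro _ (rfl | rfl | rfl)
      exacts [hφ, hmem e₁ hS₁, hmem e₂ hS₂])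

theorem exists_mem_nonvanishingDuals_ker_ne_ne {H₁ H₂ : Submodule K V} (hV : 3 ≤ finrank K V)
    (hv₁ : v₁ ≠ 0) (hv₂ : v₂ ≠ 0) (hw : w ≠ 0)
    (hroom : 3 ≤ #K ∨ 4 ≤ finrank K V ∧ w ∉ span K {v₁, v₂})
    (hcase : span K {v₁} = span K {v₂} ∨ H₁ = H₂ ∨ v₁ ∈ H₂ ∨ v₂ ∈ H₁) :
    ∃ φ ∈ nonvanishingDuals v₁ v₂ w, ker φ ≠ H₁ ∧ ker φ ≠ H₂ := by
  -- the possible kernels among `H₁`, `H₂`; unless `⟨v₁⟩ = ⟨v₂⟩` there is at most one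
  set B : Set (Submodule K V) := {W | (W = H₁ ∨ W = H₂) ∧ v₁ ∉ W ∧ v₂ ∉ W}
  suffices hB : B.encard < (nonvanishingDuals v₁ v₂ w).encard by
    obtain ⟨φ, hφ, hφB⟩ := Dual.exists_mem_ker_notMem (fun φ hφ => hφ.1) hB
    have hv : v₁ ∉ ker φ ∧ v₂ ∉ ker φ := by simp [hφ.1, hφ.2.1]
    exact ⟨φ, hφ, fun h => hφB ⟨Or.inl h, hv⟩, fun h => hφB ⟨Or.inr h, hv⟩⟩
  rcases hcase with hp | hcase
  · calc B.encard ≤ ({H₁, H₂} : Set (Submodule K V)).encard :=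
          Set.encard_le_encard fun W hW => hW.1
      _ ≤ 1 + 1 := by simpa using Set.encard_insert_le {H₂} H₁
      _ = 2 := one_add_one_eq_two
      _ < _ := two_lt_encard_nonvanishingDuals hV hv₁ hv₂ hw (hp ▸ mem_span_singleton_self v₂)
          hroom
  · have hB : B.encard ≤ 1 := Set.encard_le_one_iff.2 fun W W' hW hW' => by
      rcases hcase with h | h | h <;> aesop
    exact hB.trans_lt (one_lt_encard_nonvanishingDuals hV hv₁ hv₂ hw hroom)

end NonvanishingDuals

namespace AntiFlag

variable (A : AntiFlag F n)

theorem isAtom_pt : IsAtom A.pt := isAtom_iff_finrank_eq_one.2 A.pt_rank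

theorem disjoint_pt_hyp : Disjoint A.pt A.hyp := A.isAtom_pt.not_le_iff_disjoint.1 A.not_incident

variable {A} {H : Submodule F (Fin n → F)}

theorem not_le_hyp (hH : finrank F H = n - 1) (h : H ≠ A.hyp) : ¬H ≤ A.hyp :=
  fun hle => h (eq_of_le_of_finrank_eq hle (hH.trans A.hyp_rank.symm))

theorem not_le_pt (hn : 3 ≤ n) (hH : finrank F H = n - 1) : ¬H ≤ A.pt := fun hle => by
  have := finrank_mono hle
  rw [hH, A.pt_rank] at this
  omega

theorem not_inf_le_pt_sup_pt (hn : 4 ≤ n) {A₁ A₂ : AntiFlag F n}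
    (hcase : A₁.pt = A₂.pt ∨ A₁.hyp = A₂.hyp ∨ A₁.pt ≤ A₂.hyp ∨ A₂.pt ≤ A₁.hyp)
    (hH : finrank F H = n - 1) : ¬H ⊓ A₁.hyp ⊓ A₂.hyp ≤ A₁.pt ⊔ A₂.pt := by
  intro hle
  have hV : finrank F (Fin n → F) = n := finrank_fin_fun F
  have hD₁ := finrank_add_finrank_le_finrank_inf_add H A₁.hyp
  have hD := finrank_add_finrank_le_finrank_inf_add (H ⊓ A₁.hyp) A₂.hyp
  have := A₁.hyp_rank
  have := A₂.hyp_rank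
  have hDQ : H ⊓ A₁.hyp ⊓ A₂.hyp ≤ (A₁.pt ⊔ A₂.pt) ⊓ A₁.hyp ⊓ A₂.hyp :=
    le_inf (le_inf hle (inf_le_left.trans inf_le_right)) inf_le_right
  by_cases hhyp : A₁.hyp = A₂.hyp
  · rw [← hhyp, inf_right_idem, inf_right_idem] at hDQ
    have hQ := finrank_lt_finrank_of_lt
      (inf_lt_left.2 fun h => A₁.not_incident (le_sup_left.trans h) :
        (A₁.pt ⊔ A₂.pt) ⊓ A₁.hyp < A₁.pt ⊔ A₂.pt)
    have := finrank_add_le_finrank_add_finrank A₁.pt A₂.pt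
    have := finrank_mono hDQ
    rw [A₁.pt_rank, A₂.pt_rank] at *
    omega
  · have hQ : (A₁.pt ⊔ A₂.pt) ⊓ A₁.hyp ⊓ A₂.hyp = ⊥ := by
      rcases hcase with h | h | h | h
      · rw [← h, sup_idem, A₁.disjoint_pt_hyp.eq_bot, bot_inf_eq]
      · exact absurd h hhyp
      · rw [inf_right_comm]
        exact (disjoint_sup_inf_of_le A₁.disjoint_pt_hyp A₂.disjoint_pt_hyp h).eq_bot
      · rw [sup_comm]
        exact (disjoint_sup_inf_of_le A₂.disjoint_pt_hyp A₁.disjoint_pt_hyp h).eq_bot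
    rw [hQ, le_bot_iff] at hDQ
    rw [hDQ, finrank_bot] at hD
    omega

theorem exists_mem_notMem_hyp_pt (hn : 3 ≤ n) (hcard : 3 ≤ #F ∨ 4 ≤ n) {A₁ A₂ : AntiFlag F n}
    (hcase : A₁.pt = A₂.pt ∨ A₁.hyp = A₂.hyp ∨ A₁.pt ≤ A₂.hyp ∨ A₂.pt ≤ A₁.hyp)
    (hH : finrank F H = n - 1) (hH₁ : H ≠ A₁.hyp) (hH₂ : H ≠ A₂.hyp) :
    ∃ w ∈ H, w ∉ A₁.hyp ∧ w ∉ A₂.hyp ∧ w ∉ A₁.pt ∧ w ∉ A₂.pt ∧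
      (3 ≤ #F ∨ 4 ≤ n ∧ w ∉ A₁.pt ⊔ A₂.pt) := by
  have h₁ := not_le_hyp hH hH₁
  have h₂ := not_le_hyp hH hH₂
  have hp₁ := A₁.not_le_pt hn hH
  have hp₂ := A₂.not_le_pt hn hH
  rcases hcard with hF | hn
  · -- by `hcase`, one of the four subspaces to avoid is redundant
    rcases hcase with h | h | h | h
    · obtain ⟨w, hwH, hw₁, hw₂, hwp⟩ := exists_mem_notMem₃ h₁ h₂ hp₁ (.inl hF)
      exact ⟨w, hwH, hw₁, hw₂, hwp, h ▸ hwp, .inl hF⟩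
    · obtain ⟨w, hwH, hw₁, hwp₁, hwp₂⟩ := exists_mem_notMem₃ h₁ hp₁ hp₂ (.inl hF)
      exact ⟨w, hwH, hw₁, h ▸ hw₁, hwp₁, hwp₂, .inl hF⟩
    · obtain ⟨w, hwH, hw₁, hw₂, hwp₂⟩ := exists_mem_notMem₃ h₁ h₂ hp₂ (.inl hF)
      exact ⟨w, hwH, hw₁, hw₂, fun hw => hw₂ (h hw), hwp₂, .inl hF⟩
    · obtain ⟨w, hwH, hw₁, hw₂, hwp₁⟩ := exists_mem_notMem₃ h₁ h₂ hp₁ (.inl hF)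
      exact ⟨w, hwH, hw₁, hw₂, hwp₁, fun hw => hw₁ (h hw), .inl hF⟩
  · have hD := not_inf_le_pt_sup_pt hn hcase hH
    obtain ⟨w, hwH, hw₁, hw₂, hwP⟩ :=
      exists_mem_notMem₃ h₁ h₂ (fun hle => hD (inf_le_left.trans (inf_le_left.trans hle)))
        (.inr hD)
    exact ⟨w, hwH, hw₁, hw₂, fun hw => hwP (mem_sup_left hw), fun hw => hwP (mem_sup_right hw),
      .inr ⟨hn, hwP⟩⟩

def ofDual (w : Fin n → F) (φ : Dual F (Fin n → F)) (hw : φ w ≠ 0) : AntiFlag F n where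
  pt := span F {w}
  hyp := ker φ
  pt_rank := finrank_span_singleton fun h => hw (by simp [h])
  hyp_rank := by
    have := φ.finrank_ker_add_one_of_ne_zero fun h => hw (by simp [h])
    rw [finrank_fin_fun] at this
    omega
  not_incident := by rwa [span_singleton_le_iff_mem, mem_ker]

theorem adj4_ofDual {w : Fin n → F} {φ : Dual F (Fin n → F)} {hw : φ w ≠ 0} {v : Fin n → F}
    (hA : A.pt = span F {v}) (hwA : w ∉ A.pt) (hwH : w ∉ A.hyp) (hφv : φ v ≠ 0)
    (hφH : ker φ ≠ A.hyp) : adj4 A (ofDual w φ hw) := by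
  have hpt : A.pt ≠ span F {w} := fun h => hwA (h ▸ mem_span_singleton_self w)
  refine ⟨fun h => hpt (congrArg pt h), hpt, hφH.symm, ?_, ?_⟩
  · rwa [hA, ofDual, span_singleton_le_iff_mem, mem_ker]
  · rwa [ofDual, span_singleton_le_iff_mem]

end AntiFlag

theorem stmt5_general (hn : 3 ≤ n) (hcard : 3 ≤ Cardinal.mk F ∨ 4 ≤ n)
    (A1 A2 : AntiFlag F n) (hnot4 : ¬ adj4 A1 A2)
    (H : Submodule F (Fin n → F)) (hH : Module.finrank F H = n - 1)
    (hH1 : H ≠ A1.hyp) (hH2 : H ≠ A2.hyp) :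
    ∃ B : AntiFlag F n, adj4 A1 B ∧ adj4 A2 B ∧ B.pt ≤ H := by
  have hcase : A1.pt = A2.pt ∨ A1.hyp = A2.hyp ∨ A1.pt ≤ A2.hyp ∨ A2.pt ≤ A1.hyp := by
    by_contra! h
    exact hnot4 ⟨fun h12 => h.1 (congrArg AntiFlag.pt h12), h⟩
  obtain ⟨w, hwH, hw₁, hw₂, hwp₁, hwp₂, hroom⟩ :=
    AntiFlag.exists_mem_notMem_hyp_pt hn hcard hcase hH hH1 hH2
  obtain ⟨v₁, hv₁, hp₁⟩ := (atom_iff_nonzero_span A1.pt).1 A1.isAtom_pt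
  obtain ⟨v₂, hv₂, hp₂⟩ := (atom_iff_nonzero_span A2.pt).1 A2.isAtom_pt
  rw [hp₁, hp₂, span_singleton_le_iff_mem, span_singleton_le_iff_mem] at hcase
  rw [hp₁, hp₂, ← span_insert] at hroom
  have hw : w ≠ 0 := by rintro rfl; exact hwp₁ A1.pt.zero_mem
  have hV : finrank F (Fin n → F) = n := finrank_fin_fun F
  obtain ⟨φ, ⟨hφ₁, hφ₂, hφw⟩, hk₁, hk₂⟩ := exists_mem_nonvanishingDuals_ker_ne_ne (by rwa [hV])
    hv₁ hv₂ hw (by rwa [hV]) hcase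
  exact ⟨.ofDual w φ hφw, AntiFlag.adj4_ofDual hp₁ hwp₁ hw₁ (by simp [hφ₁]) hk₁,
    AntiFlag.adj4_ofDual hp₂ hwp₂ hw₂ hφ₂ hk₂, (span_singleton_le_iff_mem w H).2 hwH⟩

theorem stmt5 (hn : 3 ≤ n) (hcard : 3 ≤ Cardinal.mk F ∨ 4 ≤ n)
    (A1 A2 : AntiFlag F n) (hne : A1 ≠ A2) (hnot4 : ¬ adj4 A1 A2)
    (H : Submodule F (Fin n → F)) (hH : Module.finrank F H = n - 1)
    (hH1 : H ≠ A1.hyp) (hH2 : H ≠ A2.hyp) :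
    ∃ B : AntiFlag F n, adj4 A1 B ∧ adj4 A2 B ∧ B.pt ≤ H :=
  stmt5_general hn hcard A1 A2 hnot4 H hH hH1 hH2
end

section
/- If C is a linear or dually linear coclique of the graph Γ_1, then for every point-hyperplane anti-flag A ∉ C one of the following holds: (1) A^{~_1} ∩ C is empty; (2) A^{~_1} ∩ C is a singleton; (3) A^{~_1} ∩ C equals C with exactly one element removed; (4) C ⊆ A^{~_1}. -/
variable {F : Type*} [Field F] {n : ℕ}

/-- A coclique of the graph `Γ₁`: no two distinct members are `1`-adjacent. -/
def IsCoclique1 (C : Set (AntiFlag F n)) : Prop := ∀ A ∈ C, ∀ B ∈ C, ¬ adj1 A B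

/-- A linear coclique: all members share a common hyperplane and there is a line
(2-dimensional subspace) containing the point of every member. -/
def IsLinear (C : Set (AntiFlag F n)) : Prop :=
  (∃ H, ∀ A ∈ C, A.hyp = H) ∧
  ∃ L : Submodule F (Fin n → F), Module.finrank F L = 2 ∧ ∀ A ∈ C, A.pt ≤ L

/-- A dually linear coclique: all members share a common point and there is an
(n-2)-dimensional subspace contained in the hyperplane of every member. -/
def IsDuallyLinear (C : Set (AntiFlag F n)) : Prop :=
  (∃ p, ∀ A ∈ C, A.pt = p) ∧
  ∃ S : Submodule F (Fin n → F), Module.finrank F S = n - 2 ∧ ∀ A ∈ C, S ≤ A.hyp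

lemma point_unique {L K q1 q2 : Submodule F (Fin n → F)}
    (hL : Module.finrank F L = 2) (hLK : ¬ L ≤ K)
    (h1 : Module.finrank F q1 = 1) (h2 : Module.finrank F q2 = 1)
    (hq1L : q1 ≤ L) (hq2L : q2 ≤ L) (hq1K : q1 ≤ K) (hq2K : q2 ≤ K) : q1 = q2 := by
  by_contra hne
  have h0 : Module.finrank F (q1 ⊓ q2 : Submodule F (Fin n → F)) = 0 := by
    rcases Nat.lt_or_ge (Module.finrank F (q1 ⊓ q2 : Submodule F (Fin n → F))) 1 with h | h
    · omega
    · exfalso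
      have e1 : q1 ⊓ q2 = q1 := Submodule.eq_of_le_of_finrank_le inf_le_left (by omega)
      have e2 : q1 ≤ q2 := e1 ▸ inf_le_right
      exact hne (Submodule.eq_of_le_of_finrank_le e2 (by omega))
  have hsup : Module.finrank F (q1 ⊔ q2 : Submodule F (Fin n → F)) = 2 := by
    have := Submodule.finrank_sup_add_finrank_inf_eq q1 q2
    omega
  have hle : q1 ⊔ q2 ≤ L ⊓ K := sup_le (le_inf hq1L hq1K) (le_inf hq2L hq2K)
  have h2le : 2 ≤ Module.finrank F (L ⊓ K : Submodule F (Fin n → F)) :=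
    hsup ▸ Submodule.finrank_mono hle
  have : L ⊓ K = L := Submodule.eq_of_le_of_finrank_le inf_le_left (by omega)
  exact hLK (this ▸ inf_le_right)

lemma hyp_unique {S p M : Submodule F (Fin n → F)} (hn : 3 ≤ n)
    (hS : Module.finrank F S = n - 2) (hp : Module.finrank F p = 1)
    (hM : Module.finrank F M = n - 1) (hpS : ¬ p ≤ S) (hSM : S ≤ M) (hpM : p ≤ M) :
    M = S ⊔ p := by
  have h0 : Module.finrank F (S ⊓ p : Submodule F (Fin n → F)) = 0 := by
    rcases Nat.lt_or_ge (Module.finrank F (S ⊓ p : Submodule F (Fin n → F))) 1 with h | h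
    · omega
    · exfalso
      have hle : Module.finrank F (S ⊓ p : Submodule F (Fin n → F)) ≤ 1 := by
        have := Submodule.finrank_mono (inf_le_right : S ⊓ p ≤ p)
        omega
      have e1 : S ⊓ p = p := Submodule.eq_of_le_of_finrank_le inf_le_right (by omega)
      exact hpS (e1 ▸ inf_le_left)
  have hsup : Module.finrank F (S ⊔ p : Submodule F (Fin n → F)) = n - 1 := by
    have := Submodule.finrank_sup_add_finrank_inf_eq S p
    omega
  exact (Submodule.eq_of_le_of_finrank_le (sup_le hSM hpM) (by omega)).symm

lemma aux_pos {A : AntiFlag F n} {C : Set (AntiFlag F n)} {Q : AntiFlag F n → Prop}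
    (huniq : ∀ B ∈ C, ∀ B' ∈ C, Q B → Q B' → B = B')
    (hiff : ∀ B ∈ C, (adj1 A B ↔ Q B)) :
    {B ∈ C | adj1 A B} = ∅ ∨ ∃ B, {B0 ∈ C | adj1 A B0} = {B} := by
  by_cases hex : ∃ B ∈ C, Q B
  · obtain ⟨B₀, hB₀, hQ⟩ := hex
    right
    refine ⟨B₀, ?_⟩
    ext B
    simp only [Set.mem_setOf_eq, Set.mem_singleton_iff]
    constructor
    · rintro ⟨hBC, hadj⟩; exact huniq B hBC B₀ hB₀ ((hiff B hBC).1 hadj) hQ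
    · rintro rfl; exact ⟨hB₀, (hiff B hB₀).2 hQ⟩
  · left
    ext B
    simp only [Set.mem_setOf_eq, Set.mem_empty_iff_false, iff_false, not_and]
    exact fun hBC hadj => hex ⟨B, hBC, (hiff B hBC).1 hadj⟩

lemma aux_neg {A : AntiFlag F n} {C : Set (AntiFlag F n)} {Q : AntiFlag F n → Prop}
    (huniq : ∀ B ∈ C, ∀ B' ∈ C, Q B → Q B' → B = B')
    (hiff : ∀ B ∈ C, (adj1 A B ↔ ¬ Q B)) :
    (∃ B ∈ C, {B0 ∈ C | adj1 A B0} = C \ {B}) ∨ {B ∈ C | adj1 A B} = C := by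
  by_cases hex : ∃ B ∈ C, Q B
  · obtain ⟨B₀, hB₀, hQ⟩ := hex
    left
    refine ⟨B₀, hB₀, ?_⟩
    ext B
    simp only [Set.mem_setOf_eq, Set.mem_diff, Set.mem_singleton_iff]
    constructor
    · rintro ⟨hBC, hadj⟩
      refine ⟨hBC, fun h => ?_⟩
      subst h
      exact (hiff B hBC).1 hadj hQ
    · rintro ⟨hBC, hne⟩
      exact ⟨hBC, (hiff B hBC).2 fun hQB => hne (huniq B hBC B₀ hB₀ hQB hQ)⟩
  · right
    ext B
    simp only [Set.mem_setOf_eq]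
    exact ⟨fun h => h.1, fun hBC => ⟨hBC, (hiff B hBC).2 fun hQB => hex ⟨B, hBC, hQB⟩⟩⟩

theorem stmt10 (hn : 3 ≤ n) (C : Set (AntiFlag F n))
    (hC : IsCoclique1 C) (hlin : IsLinear C ∨ IsDuallyLinear C)
    (A : AntiFlag F n) (hA : A ∉ C) :
    {B ∈ C | adj1 A B} = ∅ ∨ (∃ B, {B0 ∈ C | adj1 A B0} = {B}) ∨
    (∃ B ∈ C, {B0 ∈ C | adj1 A B0} = C \ {B}) ∨ {B ∈ C | adj1 A B} = C := by
  rcases hlin with ⟨⟨H, hH⟩, L, hL2, hLpts⟩ | ⟨⟨p₀, hp₀⟩, S, hS, hSM⟩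
  · -- linear case
    by_cases hpH : A.pt ≤ H
    · by_cases hLK : L ≤ A.hyp
      · -- empty
        rcases aux_pos (A := A) (C := C) (Q := fun _ => False)
            (fun B _ B' _ h _ => h.elim)
            (fun B hB => ⟨fun ⟨_, hor⟩ => by
              rcases hor with ⟨_, h⟩ | ⟨_, h'⟩
              · exact h (le_trans (hLpts B hB) hLK)
              · exact h' (by rw [hH B hB]; exact hpH), False.elim⟩) with h | h
        · exact Or.inl h
        · exact Or.inr (Or.inl h)
      · -- complement of a point or all
        rcases aux_neg (A := A) (C := C) (Q := fun B => B.pt ≤ A.hyp)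
            (fun B hB B' hB' hQ hQ' =>
              AntiFlag.ext' (point_unique hL2 hLK B.pt_rank B'.pt_rank
                (hLpts B hB) (hLpts B' hB') hQ hQ')
                (by rw [hH B hB, hH B' hB']))
            (fun B hB => ⟨fun ⟨_, hor⟩ => by
              rcases hor with ⟨_, h⟩ | ⟨_, h'⟩
              · exact h
              · exact absurd (by rw [hH B hB]; exact hpH) h',
              fun h => ⟨fun he => hA (he ▸ hB),
                Or.inl ⟨by rw [hH B hB]; exact hpH, h⟩⟩⟩) with h | h
        · exact Or.inr (Or.inr (Or.inl h))
        · exact Or.inr (Or.inr (Or.inr h))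
    · by_cases hLK : L ≤ A.hyp
      · -- all
        rcases aux_neg (A := A) (C := C) (Q := fun _ => False)
            (fun B _ B' _ h _ => h.elim)
            (fun B hB => ⟨fun _ h => h, fun _ =>
              ⟨fun he => hA (he ▸ hB),
                Or.inr ⟨le_trans (hLpts B hB) hLK, by rw [hH B hB]; exact hpH⟩⟩⟩) with h | h
        · exact Or.inr (Or.inr (Or.inl h))
        · exact Or.inr (Or.inr (Or.inr h))
      · -- empty or singleton
        rcases aux_pos (A := A) (C := C) (Q := fun B => B.pt ≤ A.hyp)
            (fun B hB B' hB' hQ hQ' =>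
              AntiFlag.ext' (point_unique hL2 hLK B.pt_rank B'.pt_rank
                (hLpts B hB) (hLpts B' hB') hQ hQ')
                (by rw [hH B hB, hH B' hB']))
            (fun B hB => ⟨fun ⟨_, hor⟩ => by
              rcases hor with ⟨h, _⟩ | ⟨h, _⟩
              · exact absurd (by rw [hH B hB] at h; exact h) hpH
              · exact h,
              fun h => ⟨fun he => hA (he ▸ hB),
                Or.inr ⟨h, by rw [hH B hB]; exact hpH⟩⟩⟩) with h | h
        · exact Or.inl h
        · exact Or.inr (Or.inl h)
  · -- dually linear case
    by_cases hp₀K : p₀ ≤ A.hyp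
    · by_cases hptS : A.pt ≤ S
      · -- empty
        rcases aux_pos (A := A) (C := C) (Q := fun _ => False)
            (fun B _ B' _ h _ => h.elim)
            (fun B hB => ⟨fun ⟨_, hor⟩ => by
              rcases hor with ⟨_, h⟩ | ⟨_, h'⟩
              · exact h (by rw [hp₀ B hB]; exact hp₀K)
              · exact h' (le_trans hptS (hSM B hB)), False.elim⟩) with h | h
        · exact Or.inl h
        · exact Or.inr (Or.inl h)
      · -- complement of a point or all
        rcases aux_neg (A := A) (C := C) (Q := fun B => A.pt ≤ B.hyp)
            (fun B hB B' hB' hQ hQ' =>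
              AntiFlag.ext' (by rw [hp₀ B hB, hp₀ B' hB'])
                (by rw [hyp_unique hn hS A.pt_rank B.hyp_rank hptS (hSM B hB) hQ,
                        hyp_unique hn hS A.pt_rank B'.hyp_rank hptS (hSM B' hB') hQ']))
            (fun B hB => ⟨fun ⟨_, hor⟩ => by
              rcases hor with ⟨_, h⟩ | ⟨_, h'⟩
              · exact absurd (by rw [hp₀ B hB]; exact hp₀K) h
              · exact h',
              fun h => ⟨fun he => hA (he ▸ hB),
                Or.inr ⟨by rw [hp₀ B hB]; exact hp₀K, h⟩⟩⟩) with h | h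
        · exact Or.inr (Or.inr (Or.inl h))
        · exact Or.inr (Or.inr (Or.inr h))
    · by_cases hptS : A.pt ≤ S
      · -- all
        rcases aux_neg (A := A) (C := C) (Q := fun _ => False)
            (fun B _ B' _ h _ => h.elim)
            (fun B hB => ⟨fun _ h => h, fun _ =>
              ⟨fun he => hA (he ▸ hB),
                Or.inl ⟨le_trans hptS (hSM B hB), by rw [hp₀ B hB]; exact hp₀K⟩⟩⟩) with h | h
        · exact Or.inr (Or.inr (Or.inl h))
        · exact Or.inr (Or.inr (Or.inr h))
      · -- empty or singleton
        rcases aux_pos (A := A) (C := C) (Q := fun B => A.pt ≤ B.hyp)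
            (fun B hB B' hB' hQ hQ' =>
              AntiFlag.ext' (by rw [hp₀ B hB, hp₀ B' hB'])
                (by rw [hyp_unique hn hS A.pt_rank B.hyp_rank hptS (hSM B hB) hQ,
                        hyp_unique hn hS A.pt_rank B'.hyp_rank hptS (hSM B' hB') hQ']))
            (fun B hB => ⟨fun ⟨_, hor⟩ => by
              rcases hor with ⟨h, _⟩ | ⟨h, _⟩
              · exact h
              · exact absurd (by rw [hp₀ B hB] at h; exact h) hp₀K,
              fun h => ⟨fun he => hA (he ▸ hB),
                Or.inl ⟨h, by rw [hp₀ B hB]; exact hp₀K⟩⟩⟩) with h | h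
        · exact Or.inl h
        · exact Or.inr (Or.inl h)
end

section
/- Suppose |F| ≥ 4. A 4-element coclique C of the graph Γ_1 is linear or dually linear if and only if C satisfies property (L). -/
variable {F : Type*} [Field F] {n : ℕ}

/-- Property (L): for every anti-flag `A ∉ C`, the set `A^{~₁} ∩ C` is empty,
a singleton, all of `C` with exactly one element removed, or all of `C`. -/
def PropL (C : Set (AntiFlag F n)) : Prop :=
  ∀ A : AntiFlag F n, A ∉ C →
    {B ∈ C | adj1 A B} = ∅ ∨ (∃ B, {B0 ∈ C | adj1 A B0} = {B}) ∨
    (∃ B ∈ C, {B0 ∈ C | adj1 A B0} = C \ {B}) ∨ {B ∈ C | adj1 A B} = C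

/-!
An anti-flag `X = (⟨q⟩, K)` is `1`-adjacent to `B` iff exactly one of `q ∈ H_B` and `p_B ≤ K` holds.
If `C` is linear, with hyperplane `H` and line `L`, the members of `C` adjacent to `X` are those with
`p_B ≤ H_X` or those without, according as `p_X ≰ H` or `p_X ≤ H`. Two members with distinct points
in `H_X` force `L ≤ H_X`, so at most one or all members have `p_B ≤ H_X`, and (L) follows. The dually
linear case is the same with points and hyperplanes exchanged.

Conversely, for four anti-flags property (L) says that no anti-flag is adjacent to exactly two of
them. With `q` generic in a subspace `W` and `K` a generic hyperplane through a subspace `U`, the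
members adjacent to `X` are those with `W ≤ H_B` xor `p_B ≤ U`, and `|F| ≥ 4` is what allows the
genericity. Sorting the configurations by which points and which hyperplanes of `C` coincide, one
finds in each case that is neither linear nor dually linear a choice of `W` among `V`, `H_B` and
`H_A ∩ H_B` and of `U` among `0`, `p_A` and a line `p_A + p_B` selecting exactly two members.
-/

open Module Cardinal

namespace Set

variable {α β : Type*} {s : Set α}

theorem ncard_image_sep_not_le_three {f : α → β} {P : α → Prop} (hs : s.ncard = 4)
    (h : (∃ x ∈ s, P x) ∨ ¬ s.InjOn f) : (f '' {x ∈ s | ¬ P x}).ncard ≤ 3 := by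
  have hfin : s.Finite := finite_of_ncard_pos (by omega)
  rcases h with ⟨x, hx, hPx⟩ | hf
  · calc (f '' {x ∈ s | ¬ P x}).ncard ≤ {x ∈ s | ¬ P x}.ncard := ncard_image_le (hfin.sep _)
      _ ≤ (s \ {x}).ncard :=
          ncard_le_ncard (fun y hy => ⟨hy.1, fun h => hy.2 (h ▸ hPx)⟩) hfin.sdiff
      _ = 3 := by rw [ncard_sdiff_singleton_of_mem hx, hs]
  · have himage : (f '' s).ncard < 4 :=
      hs ▸ (ncard_image_le hfin).lt_of_ne fun h => hf (injOn_of_ncard_image_eq h hfin)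
    have := ncard_le_ncard (image_mono (sep_subset s (¬ P ·))) (hfin.image f)
    omega

theorem two_le_ncard_fiber {f : α → β} (hs : s.Finite) {x y : α} (hx : x ∈ s) (hy : y ∈ s)
    (hyx : y ≠ x) (hf : f y = f x) : 2 ≤ {z ∈ s | f z = f x}.ncard := by
  rw [← ncard_pair hyx.symm]
  exact ncard_le_ncard (by rintro z (rfl | rfl) <;> simp_all) (hs.sep _)

theorem ncard_fiber_eq_two {f : α → β} (hs : s.ncard = 4)
    (hshared : ∀ x ∈ s, ∃ y ∈ s, f y = f x ∧ y ≠ x) {x y : α} (hx : x ∈ s) (hy : y ∈ s)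
    (hxy : f x ≠ f y) : {z ∈ s | f z = f x}.ncard = 2 := by
  have hfin : s.Finite := finite_of_ncard_pos (by omega)
  have hfiber {x} (hx : x ∈ s) : 2 ≤ {z ∈ s | f z = f x}.ncard := by
    obtain ⟨y, hy, hfy, hyx⟩ := hshared x hx
    exact two_le_ncard_fiber hfin hx hy hyx hfy
  have hdisj : Disjoint {z ∈ s | f z = f x} {z ∈ s | f z = f y} :=
    disjoint_left.mpr fun z hzx hzy => hxy (hzx.2.symm.trans hzy.2)
  have hunion := ncard_le_ncard (union_subset (sep_subset s (f · = f x))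
    (sep_subset s (f · = f y))) hfin
  rw [ncard_union_eq hdisj (hfin.sep _) (hfin.sep _)] at hunion
  have := hfiber hx
  have := hfiber hy
  omega

theorem exists_ncard_fiber_eq_two_of_not_injOn {γ : Type*} {f : α → β} {g : α → γ}
    (hs : s.ncard = 4) (hfg : ∀ x ∈ s, ∀ y ∈ s, f x = f y → g x = g y → x = y)
    (hf : ¬ s.InjOn f) (hg : ¬ s.InjOn g) :
    (∃ x ∈ s, {y ∈ s | f y = f x}.ncard = 2) ∨ ∃ x ∈ s, {y ∈ s | g y = g x}.ncard = 2 := by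
  have hfin : s.Finite := finite_of_ncard_pos (by omega)
  obtain ⟨x, hx, x', hx', hfx, hxx'⟩ : ∃ x ∈ s, ∃ x' ∈ s, f x = f x' ∧ x ≠ x' := by
    simpa [InjOn] using hf
  obtain ⟨y, hy, y', hy', hgy, hyy'⟩ : ∃ y ∈ s, ∃ y' ∈ s, g y = g y' ∧ y ≠ y' := by
    simpa [InjOn] using hg
  -- Otherwise a fiber of `f` and a fiber of `g` with three elements each would share two.
  by_contra! h
  have hFx := (two_le_ncard_fiber hfin hx hx' hxx'.symm hfx.symm).lt_of_ne' (h.1 x hx)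
  have hGy := (two_le_ncard_fiber hfin hy hy' hyy'.symm hgy.symm).lt_of_ne' (h.2 y hy)
  have hinter : ({z ∈ s | f z = f x} ∩ {z ∈ s | g z = g y}).ncard ≤ 1 :=
    (ncard_le_one (hfin.sep _ |>.inter_of_left _)).mpr fun a ha b hb =>
      hfg a ha.1.1 b hb.1.1 (ha.1.2.trans hb.1.2.symm) (ha.2.2.trans hb.2.2.symm)
  have hunion := ncard_le_ncard (union_subset (sep_subset s (f · = f x))
    (sep_subset s (g · = g y))) hfin
  have := ncard_union_add_ncard_inter {z ∈ s | f z = f x} {z ∈ s | g z = g y}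
    (hfin.sep _) (hfin.sep _)
  omega

theorem subsingleton_sdiff_iff {t : Set α} (h : t ⊆ s) :
    (s \ t).Subsingleton ↔ (∃ a ∈ s, t = s \ {a}) ∨ t = s := by
  constructor
  · intro hsub
    rcases hsub.eq_empty_or_singleton with he | ⟨a, ha⟩
    · exact Or.inr (h.antisymm (sdiff_eq_empty.mp he))
    · refine Or.inl ⟨a, (ha ▸ mem_singleton a : a ∈ s \ t).1, ?_⟩
      rw [← ha, sdiff_sdiff_cancel_left h]
  · rintro (⟨a, -, rfl⟩ | rfl)
    · rw [sdiff_sdiff_right_self]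
      exact subsingleton_singleton.anti inter_subset_right
    · simp

theorem subsingleton_or_subsingleton_sdiff_of_iff_xor {P Q : α → Prop} {c : Prop}
    (hPQ : ∀ x ∈ s, P x ↔ Xor c (Q x)) (hQ : {x ∈ s | Q x}.Subsingleton ∨ ∀ x ∈ s, Q x) :
    {x ∈ s | P x}.Subsingleton ∨ (s \ {x ∈ s | P x}).Subsingleton := by
  rw [sdiff_sep_self]
  by_cases hc : c
  · have hP : ∀ x ∈ s, P x ↔ ¬ Q x := fun x hx => by simpa [hc] using hPQ x hx
    rcases hQ with hQ | hQ
    · exact Or.inr (hQ.anti fun x ⟨hx, hPx⟩ => ⟨hx, not_not.mp ((hP x hx).not.mp hPx)⟩)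
    · exact Or.inl fun a ha => absurd (hQ a ha.1) ((hP a ha.1).mp ha.2)
  · have hP : ∀ x ∈ s, P x ↔ Q x := fun x hx => by simpa [hc] using hPQ x hx
    rcases hQ with hQ | hQ
    · exact Or.inl (hQ.anti fun x ⟨hx, hPx⟩ => ⟨hx, (hP x hx).mp hPx⟩)
    · exact Or.inr fun a ha => absurd ((hP a ha.1).mpr (hQ a ha.1)) ha.2

end Set

section ModularLattice

variable {α : Type*} [Lattice α] [OrderBot α] [IsModularLattice α]

theorem IsAtom.sup_eq_sup_of_le_sup {a b c : α} (ha : IsAtom a) (hb : IsAtom b) (hc : IsAtom c)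
    (hab : a ≠ b) (hca : c ≠ a) (hcab : c ≤ a ⊔ b) : a ⊔ c = a ⊔ b := by
  have hcov : a ⋖ a ⊔ b := covBy_sup_of_inf_covBy_right <| by
    rw [(ha.disjoint_of_ne hb hab).eq_bot]
    exact hb.bot_covBy
  have hac : a < a ⊔ c := left_lt_sup.mpr fun h => hca ((ha.le_iff.mp h).resolve_left hc.1)
  exact (hcov.eq_or_eq le_sup_left (sup_le le_sup_left hcab)).resolve_left hac.ne'

theorem forall_le_sup_of_ncard_ne_two {ι : Type*} {s : Set ι} {f : ι → α} (hs : s.ncard = 4)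
    (hf : ∀ i ∈ s, IsAtom (f i)) (hinj : s.InjOn f)
    (h : ∀ i ∈ s, ∀ j ∈ s, i ≠ j → {k ∈ s | f k ≤ f i ⊔ f j}.ncard ≠ 2)
    {i j : ι} (hi : i ∈ s) (hj : j ∈ s) (hij : i ≠ j) : ∀ k ∈ s, f k ≤ f i ⊔ f j := by
  have hfin : s.Finite := Set.finite_of_ncard_pos (by omega)
  have exch {x y z} (hx : x ∈ s) (hy : y ∈ s) (hz : z ∈ s) (hxy : x ≠ y) (hzx : z ≠ x)
      (hle : f z ≤ f x ⊔ f y) : f x ⊔ f z = f x ⊔ f y :=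
    (hf x hx).sup_eq_sup_of_le_sup (hf y hy) (hf z hz) (fun e => hxy (hinj hx hy e))
      (fun e => hzx (hinj hz hx e)) hle
  -- For `k` off the join of `i` and `j`, that join lies above a third atom `m`, and then the join
  -- of `i` and `k` lies above no atom of `s` but those of `i` and `k`.
  by_contra! ⟨k, hk, hkij⟩
  have hki : k ≠ i := by rintro rfl; exact hkij le_sup_left
  obtain ⟨m, hm, hmij, hmi, hmj⟩ : ∃ m ∈ s, f m ≤ f i ⊔ f j ∧ m ≠ i ∧ m ≠ j := by
    by_contra! hsub
    refine h i hi j hj hij ?_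
    rw [← Set.ncard_pair hij]
    congr 1
    ext l
    constructor
    · rintro ⟨hl, hle⟩
      by_contra hl'
      simp only [Set.mem_insert_iff, Set.mem_singleton_iff, not_or] at hl'
      exact hl'.2 (hsub l hl hle hl'.1)
    · rintro (rfl | rfl)
      exacts [⟨hi, le_sup_left⟩, ⟨hj, le_sup_right⟩]
  have hj' : ¬ f j ≤ f i ⊔ f k := fun hle =>
    hkij (exch hi hk hj hki.symm hij.symm hle ▸ le_sup_right)
  have hm' : ¬ f m ≤ f i ⊔ f k := fun hle =>
    hkij ((exch hi hj hm hij hmi hmij).symm.trans (exch hi hk hm hki.symm hmi hle) ▸ le_sup_right)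
  refine h i hi k hk hki.symm (le_antisymm ?_ ?_)
  · calc {l ∈ s | f l ≤ f i ⊔ f k}.ncard ≤ (s \ {j, m}).ncard :=
          Set.ncard_le_ncard (fun l hl => ⟨hl.1, by rintro (rfl | rfl) <;> simp_all⟩) hfin.sdiff
      _ = 2 := by
          rw [Set.ncard_sdiff (by simp [Set.insert_subset_iff, hj, hm]), hs,
            Set.ncard_pair (Ne.symm hmj)]
  · rw [← Set.ncard_pair hki.symm]
    exact Set.ncard_le_ncard (by rintro l (rfl | rfl) <;> simp_all) (hfin.sep _)

end ModularLattice

namespace Submodule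

variable {K V : Type*} [Field K] [AddCommGroup V] [Module K V]

theorem exists_mem_forall_notMem_of_ncard_le {W : Submodule K V} {S : Set (Submodule K V)}
    (hS : S.Finite) (hcard : (S.ncard : Cardinal) ≤ #K) (hW : ∀ U ∈ S, ¬ W ≤ U) :
    ∃ v ∈ W, ∀ U ∈ S, v ∉ U := by
  induction S, hS using Set.Finite.induction_on with
  | empty => exact ⟨0, W.zero_mem, by simp⟩
  | @insert U T hUT hT ih =>
    rw [Set.ncard_insert_of_notMem hUT hT] at hcard
    obtain ⟨v, hvW, hvT⟩ := ih ((Nat.cast_le.mpr (Nat.le_succ _)).trans hcard)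
      fun U' hU' => hW U' (Set.mem_insert_of_mem U hU')
    by_cases hvU : v ∉ U
    · exact ⟨v, hvW, Set.forall_mem_insert.mpr ⟨hvU, hvT⟩⟩
    obtain ⟨w, hwW, hwU⟩ := SetLike.not_le_iff_exists.mp (hW U (Set.mem_insert U T))
    by_contra! hcover
    -- The vectors `w + c • v` avoid `U`, and no member of `T` contains two of them.
    have hline (c : K) : ∃ U' ∈ T, w + c • v ∈ U' := by
      obtain ⟨U', hU', hmem⟩ := hcover _ (W.add_mem hwW (W.smul_mem c hvW))
      rcases Set.mem_insert_iff.mp hU' with rfl | hU'T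
      · exact absurd (by simpa using U'.sub_mem hmem (U'.smul_mem c (not_not.mp hvU))) hwU
      · exact ⟨U', hU'T, hmem⟩
    choose g hgT hg using hline
    have hinj : Function.Injective fun c => (⟨g c, hgT c⟩ : T) := by
      intro c c' hcc'
      by_contra hne
      have hgc : g c = g c' := congrArg Subtype.val hcc'
      have hsub := (g c').sub_mem (hgc ▸ hg c) (hg c')
      rw [add_sub_add_left_eq_sub, ← sub_smul] at hsub
      exact hvT _ (hgT c') (((g c').smul_mem_iff (sub_ne_zero.mpr hne)).mp hsub)
    have : Finite T := hT.to_subtype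
    have : Finite K := Finite.of_injective _ hinj
    have hKT := Nat.card_le_card_of_injective _ hinj
    rw [← Nat.cast_card, Nat.cast_le] at hcard
    rw [Nat.card_coe_set_eq] at hKT
    omega

theorem exists_hyperplane_forall_not_le [FiniteDimensional K V] {U : Submodule K V}
    {S : Set (Submodule K V)} (hS : S.Finite) (hcard : (S.ncard : Cardinal) ≤ #K)
    (hne : S.Nonempty) (hU : ∀ P ∈ S, ¬ P ≤ U) :
    ∃ H : Submodule K V, finrank K H + 1 = finrank K V ∧ U ≤ H ∧ ∀ P ∈ S, ¬ P ≤ H := by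
  obtain ⟨f, hfU, hfS⟩ := exists_mem_forall_notMem_of_ncard_le (W := U.dualAnnihilator)
    (hS.image dualAnnihilator) ((Nat.cast_le.mpr (Set.ncard_image_le hS)).trans hcard)
    (by
      rintro _ ⟨P, hP, rfl⟩
      rw [Subspace.dualAnnihilator_le_dualAnnihilator_iff]
      exact hU P hP)
  have hfP : ∀ P ∈ S, ¬ P ≤ LinearMap.ker f := fun P hP hle =>
    hfS _ ⟨P, hP, rfl⟩ ((mem_dualAnnihilator f).mpr fun w hw => hle hw)
  obtain ⟨P, hP⟩ := hne
  have hf0 : f ≠ 0 := by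
    rintro rfl
    exact hfP P hP (by simp)
  exact ⟨LinearMap.ker f, Module.Dual.finrank_ker_add_one_of_ne_zero hf0,
    fun u hu => (mem_dualAnnihilator f).mp hfU u hu, hfP⟩

end Submodule

theorem not_top_le_of_finrank_lt {L : Submodule F (Fin n → F)} (h : finrank F L < n) :
    ¬ ⊤ ≤ L := fun hL => by
  rw [top_le_iff.mp hL, finrank_top, finrank_fin_fun] at h
  exact h.false

namespace AntiFlag

theorem ext {A B : AntiFlag F n} (hp : A.pt = B.pt) (hH : A.hyp = B.hyp) : A = B := by
  cases A
  cases B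
  simp_all

theorem isAtom_pt_s11 (A : AntiFlag F n) : IsAtom A.pt :=
  Submodule.isAtom_iff_finrank_eq_one.mpr A.pt_rank

theorem isCoatom_hyp (A : AntiFlag F n) : IsCoatom A.hyp := by
  refine ⟨fun h => A.not_incident (h ▸ le_top), fun K hK => Submodule.eq_top_of_finrank_eq ?_⟩
  have hlt := Submodule.finrank_lt_finrank_of_lt hK
  have hle := Submodule.finrank_le K
  rw [A.hyp_rank] at hlt
  rw [finrank_fin_fun] at hle ⊢
  omega

theorem hyp_sup_pt (A : AntiFlag F n) : A.hyp ⊔ A.pt = ⊤ :=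
  A.isCoatom_hyp.2 _ (left_lt_sup.mpr A.not_incident)

theorem pt_le_pt_iff {A B : AntiFlag F n} : A.pt ≤ B.pt ↔ A.pt = B.pt :=
  ⟨fun h => (B.isAtom_pt_s11.le_iff.mp h).resolve_left A.isAtom_pt_s11.1, le_of_eq⟩

theorem hyp_le_hyp_iff {A B : AntiFlag F n} : A.hyp ≤ B.hyp ↔ B.hyp = A.hyp :=
  ⟨fun h => (A.isCoatom_hyp.le_iff.mp h).resolve_left B.isCoatom_hyp.1, ge_of_eq⟩

theorem finrank_pt_sup_pt {A B : AntiFlag F n} (h : A.pt ≠ B.pt) :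
    finrank F ↥(A.pt ⊔ B.pt) = 2 := by
  have := Submodule.finrank_sup_add_finrank_inf_eq A.pt B.pt
  rw [(A.isAtom_pt_s11.disjoint_of_ne B.isAtom_pt_s11 h).eq_bot, finrank_bot, A.pt_rank,
    B.pt_rank] at this
  omega

theorem finrank_hyp_inf_hyp {A B : AntiFlag F n} (h : A.hyp ≠ B.hyp) :
    finrank F ↥(A.hyp ⊓ B.hyp) = n - 2 := by
  have := Submodule.finrank_sup_add_finrank_inf_eq A.hyp B.hyp
  rw [A.isCoatom_hyp.sup_eq_top_of_ne B.isCoatom_hyp h, finrank_top, finrank_fin_fun,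
    A.hyp_rank, B.hyp_rank] at this
  omega

end AntiFlag

open AntiFlag

theorem adj1_iff_xor {A B : AntiFlag F n} : adj1 A B ↔ Xor (A.pt ≤ B.hyp) (B.pt ≤ A.hyp) := by
  refine ⟨fun h => h.2, fun h => ⟨?_, h⟩⟩
  rintro rfl
  simp [Xor, A.not_incident] at h

theorem propL_iff_subsingleton {C : Set (AntiFlag F n)} :
    PropL C ↔
      ∀ A ∉ C, {B ∈ C | adj1 A B}.Subsingleton ∨ (C \ {B ∈ C | adj1 A B}).Subsingleton := by
  refine forall₂_congr fun A _ => ?_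
  rw [Set.subsingleton_sdiff_iff (Set.sep_subset _ _), ← or_assoc]
  refine or_congr ⟨?_, Set.Subsingleton.eq_empty_or_singleton⟩ Iff.rfl
  rintro (h | ⟨B, h⟩)
  exacts [h ▸ Set.subsingleton_empty, h ▸ Set.subsingleton_singleton]

theorem propL_of_isLinear {C : Set (AntiFlag F n)} (h : IsLinear C) : PropL C := by
  obtain ⟨⟨H, hH⟩, L, hL, hCL⟩ := h
  refine propL_iff_subsingleton.mpr fun A _ => Set.subsingleton_or_subsingleton_sdiff_of_iff_xor
    (c := A.pt ≤ H) (Q := fun B => B.pt ≤ A.hyp) (fun B hB => by rw [adj1_iff_xor, hH B hB]) ?_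
  by_contra! h
  obtain ⟨⟨B₁, ⟨hB₁, h₁⟩, B₂, ⟨hB₂, h₂⟩, hne⟩, B, hB, hBA⟩ := h
  have hp : B₁.pt ≠ B₂.pt := fun hp => hne (AntiFlag.ext hp ((hH B₁ hB₁).trans (hH B₂ hB₂).symm))
  have hL' : B₁.pt ⊔ B₂.pt = L := Submodule.eq_of_le_of_finrank_eq
    (sup_le (hCL B₁ hB₁) (hCL B₂ hB₂)) ((finrank_pt_sup_pt hp).trans hL.symm)
  exact hBA ((hCL B hB).trans (hL' ▸ sup_le h₁ h₂))

theorem propL_of_isDuallyLinear {C : Set (AntiFlag F n)} (h : IsDuallyLinear C) : PropL C := by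
  obtain ⟨⟨p, hp⟩, S, hS, hSC⟩ := h
  refine propL_iff_subsingleton.mpr fun A _ => Set.subsingleton_or_subsingleton_sdiff_of_iff_xor
    (c := p ≤ A.hyp) (Q := fun B => A.pt ≤ B.hyp)
    (fun B hB => by rw [adj1_iff_xor, hp B hB, xor_comm]) ?_
  by_contra! h
  obtain ⟨⟨B₁, ⟨hB₁, h₁⟩, B₂, ⟨hB₂, h₂⟩, hne⟩, B, hB, hBA⟩ := h
  have hH : B₁.hyp ≠ B₂.hyp := fun hH =>
    hne (AntiFlag.ext ((hp B₁ hB₁).trans (hp B₂ hB₂).symm) hH)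
  have hS' : S = B₁.hyp ⊓ B₂.hyp := Submodule.eq_of_le_of_finrank_eq
    (le_inf (hSC B₁ hB₁) (hSC B₂ hB₂)) (hS.trans (finrank_hyp_inf_hyp hH).symm)
  exact hBA ((hS' ▸ le_inf h₁ h₂ : A.pt ≤ S).trans (hSC B hB))

/-- The witness is `(⟨q⟩, K)` with `q` generic in `W` and `K` a generic hyperplane through `U`.
`hW` and `hU` leave at most four subspaces for each of them to avoid: one member of `C` imposes no
condition, or two members impose the same one. -/
theorem exists_adj1_iff_xor (hF : 4 ≤ #F) {C : Set (AntiFlag F n)} (hcard : C.ncard = 4)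
    {W U : Submodule F (Fin n → F)} (hWU : ¬ W ≤ U)
    (hW : (∃ B ∈ C, W ≤ B.hyp) ∨ ¬ C.InjOn hyp) (hU : (∃ B ∈ C, B.pt ≤ U) ∨ ¬ C.InjOn pt) :
    ∃ X : AntiFlag F n, ∀ B ∈ C, adj1 X B ↔ Xor (W ≤ B.hyp) (B.pt ≤ U) := by
  have hfin : C.Finite := Set.finite_of_ncard_pos (by omega)
  have hcard_le (V : Submodule F (Fin n → F)) {T : Set (Submodule F (Fin n → F))}
      (hT : T.ncard ≤ 3) : ((insert V T).ncard : Cardinal) ≤ #F :=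
    le_trans (by exact_mod_cast (Set.ncard_insert_le V T).trans (by omega)) hF
  obtain ⟨q, hqW, hq⟩ := Submodule.exists_mem_forall_notMem_of_ncard_le (W := W)
    (((hfin.sep _).image hyp).insert U) (hcard_le U (Set.ncard_image_sep_not_le_three hcard hW))
    (by
      rintro _ (rfl | ⟨B, hB, rfl⟩)
      exacts [hWU, hB.2])
  set P := Submodule.span F {q}
  have hqU : q ∉ U := hq U (Set.mem_insert U _)
  have hq0 : q ≠ 0 := fun h => hqU (h ▸ U.zero_mem)
  obtain ⟨K, hK, hUK, hKS⟩ := Submodule.exists_hyperplane_forall_not_le (U := U)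
    (((hfin.sep _).image pt).insert P) (hcard_le P (Set.ncard_image_sep_not_le_three hcard hU))
    (Set.insert_nonempty _ _)
    (by
      rintro _ (rfl | ⟨B, hB, rfl⟩)
      exacts [(Submodule.span_singleton_le_iff_mem q U).not.mpr hqU, hB.2])
  rw [finrank_fin_fun] at hK
  refine ⟨⟨P, K, finrank_span_singleton hq0, by omega, hKS P (Set.mem_insert _ _)⟩, fun B hB => ?_⟩
  have hPB : P ≤ B.hyp ↔ W ≤ B.hyp := by
    rw [Submodule.span_singleton_le_iff_mem]
    exact ⟨fun h => by_contra fun hW => hq _ (Set.mem_insert_of_mem _ ⟨B, ⟨hB, hW⟩, rfl⟩) h,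
      fun h => h hqW⟩
  have hBK : B.pt ≤ K ↔ B.pt ≤ U :=
    ⟨fun h => by_contra fun hU => hKS _ (Set.mem_insert_of_mem _ ⟨B, ⟨hB, hU⟩, rfl⟩) h,
      fun h => h.trans hUK⟩
  simp only [adj1_iff_xor, hPB, hBK]

theorem not_propL_of_ncard_adj1_eq_two {C : Set (AntiFlag F n)} (hC : IsCoclique1 C)
    (hcard : C.ncard = 4) {X : AntiFlag F n} (hX : {B ∈ C | adj1 X B}.ncard = 2) :
    ¬ PropL C := by
  have hfin : C.Finite := Set.finite_of_ncard_pos (by omega)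
  have hXC : X ∉ C := fun hXC => by
    rw [Set.sep_eq_empty_iff_mem_false.mpr fun B hB => hC X hXC B hB] at hX
    simp at hX
  rw [propL_iff_subsingleton]
  intro h
  rcases h X hXC with h | h
  · have := (Set.ncard_le_one (hfin.sep _)).mpr fun a ha b hb => h ha hb
    omega
  · have := (Set.ncard_le_one hfin.sdiff).mpr fun a ha b hb => h ha hb
    rw [Set.ncard_sdiff (Set.sep_subset _ _) (hfin.sep _)] at this
    omega

theorem not_propL_of_xor (hF : 4 ≤ #F) {C : Set (AntiFlag F n)} (hC : IsCoclique1 C)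
    (hcard : C.ncard = 4) {W U : Submodule F (Fin n → F)} (hWU : ¬ W ≤ U)
    (hW : (∃ B ∈ C, W ≤ B.hyp) ∨ ¬ C.InjOn hyp) (hU : (∃ B ∈ C, B.pt ≤ U) ∨ ¬ C.InjOn pt)
    {Q : AntiFlag F n → Prop} (hQ : ∀ B ∈ C, Xor (W ≤ B.hyp) (B.pt ≤ U) ↔ Q B)
    (h2 : {B ∈ C | Q B}.ncard = 2) : ¬ PropL C := by
  obtain ⟨X, hX⟩ := exists_adj1_iff_xor hF hcard hWU hW hU
  refine not_propL_of_ncard_adj1_eq_two hC hcard (X := X) ?_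
  rw [← h2]
  congr 1
  ext B
  exact and_congr_right fun hB => (hX B hB).trans (hQ B hB)

section Configurations

variable {C : Set (AntiFlag F n)}

theorem not_propL_of_isolated_pt_of_isolated_hyp (hn : 3 ≤ n) (hF : 4 ≤ #F)
    (hC : IsCoclique1 C) (hcard : C.ncard = 4) {A B : AntiFlag F n} (hA : A ∈ C) (hB : B ∈ C)
    (hAB : A ≠ B) (hpA : ∀ D ∈ C, D.pt = A.pt → D = A) (hHB : ∀ D ∈ C, D.hyp = B.hyp → D = B) :
    ¬ PropL C := by
  have hWU : ¬ B.hyp ≤ A.pt := fun h => by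
    have := Submodule.finrank_mono h
    rw [B.hyp_rank, A.pt_rank] at this
    omega
  refine not_propL_of_xor hF hC hcard hWU (.inl ⟨B, hB, le_rfl⟩) (.inl ⟨A, hA, le_rfl⟩)
    (Q := fun D => D = A ∨ D = B) (fun D hD => ?_) ?_
  · rw [hyp_le_hyp_iff, pt_le_pt_iff]
    constructor
    · rintro (⟨h, -⟩ | ⟨h, -⟩)
      exacts [Or.inr (hHB D hD h), Or.inl (hpA D hD h)]
    · rintro (rfl | rfl)
      · exact Or.inr ⟨rfl, fun h => hAB (hHB D hD h)⟩
      · exact Or.inl ⟨rfl, fun h => hAB (hpA D hD h).symm⟩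
  · rw [← Set.ncard_pair hAB]
    congr 1
    ext D
    exact ⟨fun h => h.2, fun h => ⟨h.elim (· ▸ hA) (· ▸ hB), h⟩⟩

theorem not_propL_of_ncard_pt_le_eq_two (hn : 3 ≤ n) (hF : 4 ≤ #F) (hC : IsCoclique1 C)
    (hcard : C.ncard = 4) (hhyp : ¬ C.InjOn hyp) {L : Submodule F (Fin n → F)}
    (hL : finrank F L = 2) (h2 : {E ∈ C | E.pt ≤ L}.ncard = 2) : ¬ PropL C := by
  obtain ⟨B, hB, hBL⟩ := Set.nonempty_of_ncard_ne_zero (h2 ▸ two_ne_zero)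
  refine not_propL_of_xor hF hC hcard (not_top_le_of_finrank_lt (by omega)) (.inr hhyp)
    (.inl ⟨B, hB, hBL⟩) (fun E _ => ?_) h2
  simp [top_le_iff, E.isCoatom_hyp.1]

theorem not_propL_of_forall_pt_le_of_ncard_fiber_hyp_eq_two (hn : 3 ≤ n) (hF : 4 ≤ #F)
    (hC : IsCoclique1 C) (hcard : C.ncard = 4) {L : Submodule F (Fin n → F)}
    (hL : finrank F L = 2) (hCL : ∀ E ∈ C, E.pt ≤ L) {B : AntiFlag F n} (hB : B ∈ C)
    (h2 : {E ∈ C | E.hyp = B.hyp}.ncard = 2) : ¬ PropL C := by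
  have hWU : ¬ B.hyp ≤ L := fun h =>
    not_top_le_of_finrank_lt (by omega) (B.hyp_sup_pt ▸ sup_le h (hCL B hB))
  refine not_propL_of_xor hF hC hcard hWU (.inl ⟨B, hB, le_rfl⟩) (.inl ⟨B, hB, hCL B hB⟩)
    (Q := fun E => ¬ E.hyp = B.hyp) (fun E hE => by simp [hCL E hE, hyp_le_hyp_iff, xor_comm]) ?_
  rw [← Set.sdiff_sep_self, Set.ncard_sdiff (Set.sep_subset _ _)
    ((Set.finite_of_ncard_pos (by omega)).sep _), hcard, h2]

theorem not_propL_of_ncard_fiber_hyp_eq_two (hn : 3 ≤ n) (hF : 4 ≤ #F) (hC : IsCoclique1 C)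
    (hcard : C.ncard = 4) (hpt : ¬ C.InjOn pt) {B : AntiFlag F n} (hB : B ∈ C)
    (h2 : {E ∈ C | E.hyp = B.hyp}.ncard = 2) : ¬ PropL C := by
  have hWU : ¬ B.hyp ≤ ⊥ := fun h => by
    have := B.hyp_rank
    rw [le_bot_iff.mp h, finrank_bot] at this
    omega
  refine not_propL_of_xor hF hC hcard hWU (.inl ⟨B, hB, le_rfl⟩) (.inr hpt) (fun E _ => ?_) h2
  simp [E.isAtom_pt_s11.1, hyp_le_hyp_iff, xor_comm]

theorem not_propL_of_ncard_fiber_pt_eq_two (hn : 3 ≤ n) (hF : 4 ≤ #F) (hC : IsCoclique1 C)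
    (hcard : C.ncard = 4) (hhyp : ¬ C.InjOn hyp) {A : AntiFlag F n} (hA : A ∈ C)
    (h2 : {E ∈ C | E.pt = A.pt}.ncard = 2) : ¬ PropL C := by
  refine not_propL_of_xor hF hC hcard (not_top_le_of_finrank_lt (by rw [A.pt_rank]; omega))
    (.inr hhyp) (.inl ⟨A, hA, le_rfl⟩) (fun E _ => ?_) h2
  simp [top_le_iff, E.isCoatom_hyp.1, pt_le_pt_iff]

theorem not_propL_of_ncard_le_hyp_eq_two (hn : 3 ≤ n) (hF : 4 ≤ #F) (hC : IsCoclique1 C)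
    (hcard : C.ncard = 4) (hpt : ¬ C.InjOn pt) {S : Submodule F (Fin n → F)}
    (hS : finrank F S = n - 2) (h2 : {E ∈ C | S ≤ E.hyp}.ncard = 2) : ¬ PropL C := by
  have hWU : ¬ S ≤ ⊥ := fun h => by
    rw [le_bot_iff.mp h, finrank_bot] at hS
    omega
  obtain ⟨B, hB, hSB⟩ := Set.nonempty_of_ncard_ne_zero (h2 ▸ two_ne_zero)
  refine not_propL_of_xor hF hC hcard hWU (.inl ⟨B, hB, hSB⟩) (.inr hpt) (fun E _ => ?_) h2
  simp [E.isAtom_pt_s11.1, xor_comm]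

theorem not_propL_of_forall_le_hyp_of_ncard_fiber_pt_eq_two (hn : 3 ≤ n) (hF : 4 ≤ #F)
    (hC : IsCoclique1 C) (hcard : C.ncard = 4) {S : Submodule F (Fin n → F)}
    (hS : finrank F S = n - 2) (hCS : ∀ E ∈ C, S ≤ E.hyp) {A : AntiFlag F n} (hA : A ∈ C)
    (h2 : {E ∈ C | E.pt = A.pt}.ncard = 2) : ¬ PropL C := by
  have hWU : ¬ S ≤ A.pt := fun h => by
    rcases A.isAtom_pt_s11.le_iff.mp h with h0 | rfl
    · rw [h0, finrank_bot] at hS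
      omega
    · exact A.not_incident (hCS A hA)
  refine not_propL_of_xor hF hC hcard hWU (.inl ⟨A, hA, hCS A hA⟩) (.inl ⟨A, hA, le_rfl⟩)
    (Q := fun E => ¬ E.pt = A.pt) (fun E hE => by simp [hCS E hE, pt_le_pt_iff]) ?_
  rw [← Set.sdiff_sep_self, Set.ncard_sdiff (Set.sep_subset _ _)
    ((Set.finite_of_ncard_pos (by omega)).sep _), hcard, h2]

theorem not_propL_of_injOn_pt (hn : 3 ≤ n) (hF : 4 ≤ #F) (hC : IsCoclique1 C)
    (hcard : C.ncard = 4) (hinj : C.InjOn pt) (hlin : ¬ IsLinear C) : ¬ PropL C := by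
  by_cases hiso : ∃ B ∈ C, ∀ D ∈ C, D.hyp = B.hyp → D = B
  · obtain ⟨B, hB, hHB⟩ := hiso
    obtain ⟨A, hA, hAB⟩ := Set.exists_ne_of_one_lt_ncard (by omega : 1 < C.ncard) B
    exact not_propL_of_isolated_pt_of_isolated_hyp hn hF hC hcard hA hB hAB
      (fun D hD h => hinj hD hA h) hHB
  have hshared : ∀ B ∈ C, ∃ D ∈ C, D.hyp = B.hyp ∧ D ≠ B := by
    push Not at hiso
    exact hiso
  obtain ⟨A, hA⟩ := Set.nonempty_of_ncard_ne_zero (by omega : C.ncard ≠ 0)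
  obtain ⟨D, hD, hDA⟩ := Set.exists_ne_of_one_lt_ncard (by omega : 1 < C.ncard) A
  have hhyp : ¬ C.InjOn hyp := fun hinjH => by
    obtain ⟨B, hB, h, hne⟩ := hshared A hA
    exact hne (hinjH hB hA h)
  by_cases hline : ∃ A ∈ C, ∃ D ∈ C, A ≠ D ∧ {E ∈ C | E.pt ≤ A.pt ⊔ D.pt}.ncard = 2
  · obtain ⟨A, hA, D, hD, hAD, h2⟩ := hline
    exact not_propL_of_ncard_pt_le_eq_two hn hF hC hcard hhyp
      (finrank_pt_sup_pt ((hinj.ne_iff hA hD).mpr hAD)) h2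
  push Not at hline
  have hL := finrank_pt_sup_pt ((hinj.ne_iff hA hD).mpr hDA.symm)
  have hCL := forall_le_sup_of_ncard_ne_two hcard (fun E _ => E.isAtom_pt_s11) hinj hline hA hD
    hDA.symm
  obtain ⟨B, hB, B', hB', hBB'⟩ : ∃ B ∈ C, ∃ B' ∈ C, B.hyp ≠ B'.hyp := by
    by_contra! h
    exact hlin ⟨⟨A.hyp, fun E hE => h E hE A hA⟩, _, hL, hCL⟩
  exact not_propL_of_forall_pt_le_of_ncard_fiber_hyp_eq_two hn hF hC hcard hL hCL hB
    (Set.ncard_fiber_eq_two hcard hshared hB hB' hBB')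

theorem not_propL_of_injOn_hyp (hn : 3 ≤ n) (hF : 4 ≤ #F) (hC : IsCoclique1 C)
    (hcard : C.ncard = 4) (hinj : C.InjOn hyp) (hdlin : ¬ IsDuallyLinear C) : ¬ PropL C := by
  by_cases hiso : ∃ A ∈ C, ∀ D ∈ C, D.pt = A.pt → D = A
  · obtain ⟨A, hA, hpA⟩ := hiso
    obtain ⟨B, hB, hBA⟩ := Set.exists_ne_of_one_lt_ncard (by omega : 1 < C.ncard) A
    exact not_propL_of_isolated_pt_of_isolated_hyp hn hF hC hcard hA hB hBA.symm hpA
      (fun D hD h => hinj hD hB h)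
  have hshared : ∀ A ∈ C, ∃ D ∈ C, D.pt = A.pt ∧ D ≠ A := by
    push Not at hiso
    exact hiso
  obtain ⟨A, hA⟩ := Set.nonempty_of_ncard_ne_zero (by omega : C.ncard ≠ 0)
  obtain ⟨D, hD, hDA⟩ := Set.exists_ne_of_one_lt_ncard (by omega : 1 < C.ncard) A
  have hpt : ¬ C.InjOn pt := fun hinjP => by
    obtain ⟨B, hB, h, hne⟩ := hshared A hA
    exact hne (hinjP hB hA h)
  by_cases hpencil : ∃ A ∈ C, ∃ D ∈ C, A ≠ D ∧ {E ∈ C | A.hyp ⊓ D.hyp ≤ E.hyp}.ncard = 2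
  · obtain ⟨A, hA, D, hD, hAD, h2⟩ := hpencil
    exact not_propL_of_ncard_le_hyp_eq_two hn hF hC hcard hpt
      (finrank_hyp_inf_hyp ((hinj.ne_iff hA hD).mpr hAD)) h2
  push Not at hpencil
  have hS := finrank_hyp_inf_hyp ((hinj.ne_iff hA hD).mpr hDA.symm)
  -- `forall_le_sup_of_ncard_ne_two` in the order dual, where hyperplanes are atoms
  have hCS : ∀ E ∈ C, A.hyp ⊓ D.hyp ≤ E.hyp :=
    forall_le_sup_of_ncard_ne_two (f := fun E => OrderDual.toDual E.hyp) hcard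
      (fun E _ => E.isCoatom_hyp.dual) (OrderDual.toDual.injective.comp_injOn (f := hyp) hinj)
      hpencil hA hD hDA.symm
  obtain ⟨B, hB, B', hB', hBB'⟩ : ∃ B ∈ C, ∃ B' ∈ C, B.pt ≠ B'.pt := by
    by_contra! h
    exact hdlin ⟨⟨A.pt, fun E hE => h E hE A hA⟩, _, hS, hCS⟩
  exact not_propL_of_forall_le_hyp_of_ncard_fiber_pt_eq_two hn hF hC hcard hS hCS hB
    (Set.ncard_fiber_eq_two hcard hshared hB hB' hBB')

theorem not_propL_of_not_injOn (hn : 3 ≤ n) (hF : 4 ≤ #F) (hC : IsCoclique1 C)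
    (hcard : C.ncard = 4) (hpt : ¬ C.InjOn pt) (hhyp : ¬ C.InjOn hyp) : ¬ PropL C := by
  rcases Set.exists_ncard_fiber_eq_two_of_not_injOn hcard
    (fun _ _ _ _ hH hp => AntiFlag.ext hp hH) hhyp hpt with ⟨B, hB, h2⟩ | ⟨A, hA, h2⟩
  · exact not_propL_of_ncard_fiber_hyp_eq_two hn hF hC hcard hpt hB h2
  · exact not_propL_of_ncard_fiber_pt_eq_two hn hF hC hcard hhyp hA h2

end Configurations

theorem stmt11 (hn : 3 ≤ n) (hF : 4 ≤ Cardinal.mk F)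
    (C : Set (AntiFlag F n)) (hC : IsCoclique1 C) (hcard : C.ncard = 4) :
    (IsLinear C ∨ IsDuallyLinear C) ↔ PropL C := by
  refine ⟨fun h => h.elim propL_of_isLinear propL_of_isDuallyLinear, fun hL => ?_⟩
  by_contra! h
  by_cases hpt : C.InjOn AntiFlag.pt
  · exact not_propL_of_injOn_pt hn hF hC hcard hpt h.1 hL
  by_cases hhyp : C.InjOn AntiFlag.hyp
  · exact not_propL_of_injOn_hyp hn hF hC hcard hhyp h.2 hL
  exact not_propL_of_not_injOn hn hF hC hcard hpt hhyp hL
end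

section
/- Suppose |F| ≥ 4. Let S be a set of five points of PG(n-1,F) and let p ∈ S. Then there exists a hyperplane H of PG(n-1,F) such that p ⊆ H and q ⊄ H for every q ∈ S with q ≠ p (i.e., H intersects the set S precisely in the point p). -/
/-!
Hyperplanes through `p` are kernels of nonzero functionals in the annihilator `p⁰` of `p`, and
such a hyperplane contains a point `q ≠ p` exactly when the functional lies in `q⁰`. Since
`q ⊄ p`, each `p⁰ ∩ q⁰` is a proper subspace of `p⁰`, and a vector space over `F` is never
the union of at most `|F|` proper subspaces: if `x` avoids all but one of them, `B`, and
`x ∈ B`, then the `|F|` points `w + t • x` with `w ∉ B` all avoid `B`, while every other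
subspace contains at most one of them.
-/

open Module Cardinal

namespace Submodule

variable {F M : Type*} [Field F] [AddCommGroup M] [Module F M]

theorem exists_add_smul_forall_notMem (s : Finset (Submodule F M))
    (hcard : (s.card : Cardinal) < #F) {x : M} (hx : ∀ q ∈ s, x ∉ q) (w : M) :
    ∃ t : F, ∀ q ∈ s, w + t • x ∉ q := by
  by_contra! hcover
  choose g hgs hg using hcover
  have hg_inj : Function.Injective fun t => (⟨g t, hgs t⟩ : s) := by
    intro t t' htt'
    have hq : g t = g t' := congrArg Subtype.val htt'
    by_contra hne
    have hdiff : (t - t') • x ∈ g t' := by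
      have := (g t').sub_mem (hq ▸ hg t) (hg t')
      rwa [add_sub_add_left_eq_sub, ← sub_smul] at this
    exact hx _ (hgs t') ((smul_mem_iff _ (sub_ne_zero.mpr hne)).mp hdiff)
  have := lift_mk_le_lift_mk_of_injective hg_inj
  rw [mk_coe_finset, lift_natCast, lift_le_nat_iff] at this
  exact hcard.not_ge this

theorem exists_forall_notMem_of_card_le (s : Finset (Submodule F M)) (hs : ∀ q ∈ s, q ≠ ⊤)
    (hcard : (s.card : Cardinal) ≤ #F) : ∃ x : M, ∀ q ∈ s, x ∉ q := by
  induction s using Finset.induction_on with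
  | empty => exact ⟨0, by simp⟩
  | insert B s hBs ih =>
    rw [Finset.card_insert_of_notMem hBs] at hcard
    have hlt : (s.card : Cardinal) < #F :=
      (Nat.cast_lt.mpr s.card.lt_succ_self).trans_le hcard
    obtain ⟨x, hx⟩ := ih (fun q hq => hs q (Finset.mem_insert_of_mem hq)) hlt.le
    by_cases hxB : x ∈ B
    · obtain ⟨w, -, hwB⟩ := SetLike.exists_of_lt (lt_top_iff_ne_top.mpr (hs B (by simp)))
      obtain ⟨t, ht⟩ := exists_add_smul_forall_notMem s hlt hx w
      refine ⟨w + t • x, Finset.forall_mem_insert _ _ _ |>.mpr ⟨?_, ht⟩⟩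
      rwa [Submodule.add_mem_iff_left _ (B.smul_mem t hxB)]
    · exact ⟨x, Finset.forall_mem_insert _ _ _ |>.mpr ⟨hxB, hx⟩⟩

end Submodule

namespace Subspace

variable {F V : Type*} [Field F] [AddCommGroup V] [Module F V]

theorem exists_mem_dualAnnihilator_forall_notMem (p : Subspace F V) (T : Finset (Subspace F V))
    (hT : ∀ q ∈ T, ¬ q ≤ p) (hcard : (T.card : Cardinal) ≤ #F) :
    ∃ φ ∈ p.dualAnnihilator, ∀ q ∈ T, φ ∉ q.dualAnnihilator := by
  classical
  obtain ⟨φ, hφ⟩ := Submodule.exists_forall_notMem_of_card_le (M := p.dualAnnihilator)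
    (T.image fun q => q.dualAnnihilator.comap p.dualAnnihilator.subtype)
    (by
      intro B hB
      obtain ⟨q, hq, rfl⟩ := Finset.mem_image.mp hB
      rw [Ne, Submodule.comap_subtype_eq_top, dualAnnihilator_le_dualAnnihilator_iff]
      exact hT q hq)
    ((Nat.cast_le.mpr Finset.card_image_le).trans hcard)
  exact ⟨φ, φ.2, fun q hq hφq => hφ _ (Finset.mem_image_of_mem _ hq) hφq⟩

theorem exists_hyperplane_ge_forall_not_le [FiniteDimensional F V] (p : Subspace F V)
    (T : Finset (Subspace F V)) (hTne : T.Nonempty) (hT : ∀ q ∈ T, ¬ q ≤ p)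
    (hcard : (T.card : Cardinal) ≤ #F) :
    ∃ H : Subspace F V, finrank F H + 1 = finrank F V ∧ p ≤ H ∧ ∀ q ∈ T, ¬ q ≤ H := by
  obtain ⟨φ, hφp, hφT⟩ := exists_mem_dualAnnihilator_forall_notMem p T hT hcard
  have hle_ker {q : Subspace F V} : q ≤ LinearMap.ker φ ↔ φ ∈ q.dualAnnihilator := by
    rw [Submodule.mem_dualAnnihilator]; rfl
  obtain ⟨q₀, hq₀⟩ := hTne
  have hφ : φ ≠ 0 := by
    rintro rfl
    exact hφT q₀ hq₀ (Submodule.zero_mem _)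
  exact ⟨LinearMap.ker φ, Module.Dual.finrank_ker_add_one_of_ne_zero hφ, hle_ker.mpr hφp,
    fun q hq hqH => hφT q hq (hle_ker.mp hqH)⟩

end Subspace

theorem stmt13_general {F : Type*} [Field F] {n : ℕ}
    (hF : 4 ≤ Cardinal.mk F)
    (S : Set (Submodule F (Fin n → F))) (hS : ∀ q ∈ S, Module.finrank F q = 1)
    (hcard : S.ncard = 5)
    (p : Submodule F (Fin n → F)) (hp : p ∈ S) :
    ∃ H : Submodule F (Fin n → F), Module.finrank F H = n - 1 ∧ p ≤ H ∧
      ∀ q ∈ S, q ≠ p → ¬ q ≤ H := by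
  have hfin : (S \ {p}).Finite := (Set.finite_of_ncard_ne_zero (by omega)).sdiff
  have hcard' : hfin.toFinset.card = 4 := by
    rw [← Set.ncard_eq_toFinset_card _ hfin, Set.ncard_sdiff_singleton_of_mem hp, hcard]
  have hnot_le : ∀ q ∈ hfin.toFinset, ¬ q ≤ p := by
    intro q hq hqp
    rw [Set.Finite.mem_toFinset] at hq
    exact hq.2 (Submodule.eq_of_le_of_finrank_eq hqp (by rw [hS p hp, hS q hq.1]))
  obtain ⟨H, hH, hpH, hqH⟩ := Subspace.exists_hyperplane_ge_forall_not_le p hfin.toFinset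
    (Finset.card_pos.mp (by omega)) hnot_le (by rw [hcard']; exact_mod_cast hF)
  refine ⟨H, by rw [Module.finrank_fin_fun] at hH; omega, hpH, fun q hq hqp => ?_⟩
  exact hqH q (hfin.mem_toFinset.mpr ⟨hq, hqp⟩)

theorem stmt13 {F : Type*} [Field F] {n : ℕ} (hn : 3 ≤ n)
    (hF : 4 ≤ Cardinal.mk F)
    (S : Set (Submodule F (Fin n → F))) (hS : ∀ q ∈ S, Module.finrank F q = 1)
    (hcard : S.ncard = 5)
    (p : Submodule F (Fin n → F)) (hp : p ∈ S) :
    ∃ H : Submodule F (Fin n → F), Module.finrank F H = n - 1 ∧ p ≤ H ∧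
      ∀ q ∈ S, q ≠ p → ¬ q ≤ H :=
  stmt13_general hF S hS hcard p hp
end

section
/- Let v_1 = (x_1, x_1^*) and v_2 = (x_2, x_2^*) be distinct vectors of W = V × V* with Q(v_1) = Q(v_2) = 1. Then Q(v_1 + v_2) = 1 if and only if the point-hyperplane anti-flags (span(x_1), ker(x_1^*)) and (span(x_2), ker(x_2^*)) are 1-adjacent. -/
theorem stmt16 {n : ℕ} (hn : 3 ≤ n)
    (x1 x2 : Fin n → ZMod 2) (f1 f2 : (Fin n → ZMod 2) →ₗ[ZMod 2] ZMod 2)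
    (hne : (x1, f1) ≠ (x2, f2)) (h1 : f1 x1 = 1) (h2 : f2 x2 = 1) :
    (f1 + f2) (x1 + x2) = 1 ↔
      ((Submodule.span (ZMod 2) {x1}, LinearMap.ker f1) ≠
          (Submodule.span (ZMod 2) {x2}, LinearMap.ker f2) ∧
        ((Submodule.span (ZMod 2) {x1} ≤ LinearMap.ker f2 ∧
            ¬ Submodule.span (ZMod 2) {x2} ≤ LinearMap.ker f1) ∨
          (Submodule.span (ZMod 2) {x2} ≤ LinearMap.ker f1 ∧
            ¬ Submodule.span (ZMod 2) {x1} ≤ LinearMap.ker f2))) := by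
  have hz : ∀ a : ZMod 2, a = 0 ∨ a = 1 := by decide
  have hx : Submodule.span (ZMod 2) {x1} ≠ Submodule.span (ZMod 2) {x2} ∨ x1 = x2 := by
    rcases eq_or_ne (Submodule.span (ZMod 2) {x1}) (Submodule.span (ZMod 2) {x2}) with h | h
    · right
      have hx1 : x1 ∈ Submodule.span (ZMod 2) {x2} := h ▸ Submodule.mem_span_singleton_self x1
      rcases Submodule.mem_span_singleton.mp hx1 with ⟨c, hc⟩
      rcases hz c with rfl | rfl
      · rw [zero_smul] at hc
        rw [← hc] at h1
        simp at h1
      · rw [one_smul] at hc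
        exact hc.symm
    · left; exact h
  have hval : (f1 + f2) (x1 + x2) = f1 x2 + f2 x1 := by
    have e : (f1 + f2) (x1 + x2) = f1 x1 + f1 x2 + (f2 x1 + f2 x2) := by
      simp [map_add]
      ring
    rw [e, h1, h2]
    have : (1 : ZMod 2) + 1 = 0 := by decide
    ring_nf
    rcases hz (f1 x2) with ha | ha <;> rcases hz (f2 x1) with hb | hb <;>
      rw [ha, hb] <;> decide
  rw [hval, Submodule.span_singleton_le_iff_mem, Submodule.span_singleton_le_iff_mem,
    LinearMap.mem_ker, LinearMap.mem_ker]
  rcases hz (f1 x2) with ha | ha <;> rcases hz (f2 x1) with hb | hb <;>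
      rw [ha, hb] <;> simp
  · intro h _
    rcases hx with hs | hs
    · exact hs h
    · rw [hs] at h1; rw [h1] at ha; exact one_ne_zero ha
  · intro h _
    rcases hx with hs | hs
    · exact hs h
    · rw [← hs] at h2; rw [h2] at hb; exact one_ne_zero hb
end

section
/- Let u, v, w be three mutually distinct nonsingular vectors of W that are pairwise adjacent (i.e., Q(u+v) = Q(u+w) = Q(v+w) = 1). Then w = u + v (equivalently, {u, v, w} is the set of nonzero vectors of a 2-dimensional subspace, i.e., a totally nonsingular projective line) if and only if every nonsingular vector z ∉ {u, v, w} is adjacent to exactly two elements of {u, v, w} or to no element of {u, v, w}. -/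
/-- The 2n-dimensional vector space `W = V × V*` over the field with two elements. -/
abbrev Wsp (n : ℕ) := (Fin n → ZMod 2) × ((Fin n → ZMod 2) →ₗ[ZMod 2] ZMod 2)

/-- The hyperbolic quadratic form `Q(x, x^*) = x^*(x)` on `W`. -/
def Qf {n : ℕ} (v : Wsp n) : ZMod 2 := v.2 v.1

/-!
For nonsingular `z` and `a` we have `Q(z + a) = B(z, a)`, where `B` is the polar form of `Q`,
so the number of elements of `{u, v, w}` adjacent to `z` has the parity of `B(z, u + v + w)`.
If `w = u + v` this is `B(z, 0) = 0`, which leaves only the counts `0` and `2`.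
Otherwise `s = u + v + w ≠ 0`, and some nonsingular `z` has `B(z, s) = 1`. Pairwise adjacency
makes each of `u, v, w` orthogonal to `s`, so `z ∉ {u, v, w}`, and `z` has an odd number of
neighbours in `{u, v, w}`.
-/

lemma natCast_card_filter_eq_one_eq_sum {α : Type*} (s : Finset α) (f : α → ZMod 2) :
    ((s.filter (f · = 1)).card : ZMod 2) = ∑ a ∈ s, f a := by
  rw [Finset.natCast_card_filter]
  refine Finset.sum_congr rfl fun a _ => ?_
  generalize f a = t
  fin_cases t <;> rfl

lemma ncard_sep_triple_eq_two_or_zero_iff {α : Type*} {u v w : α}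
    (huv : u ≠ v) (huw : u ≠ w) (hvw : v ≠ w) (f : α → ZMod 2) :
    ({a ∈ ({u, v, w} : Set α) | f a = 1}.ncard = 2 ∨
        {a ∈ ({u, v, w} : Set α) | f a = 1}.ncard = 0) ↔ f u + f v + f w = 0 := by
  classical
  have hset : {a ∈ ({u, v, w} : Set α) | f a = 1} =
      ↑(({u, v, w} : Finset α).filter (f · = 1)) := by
    ext; simp
  have hparity : (({u, v, w} : Finset α).filter (f · = 1)).card = f u + f v + f w := by
    rw [natCast_card_filter_eq_one_eq_sum, Finset.sum_insert (by simp [huv, huw]),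
      Finset.sum_pair hvw, add_assoc]
  have hle : (({u, v, w} : Finset α).filter (f · = 1)).card ≤ 3 :=
    (Finset.card_filter_le _ _).trans Finset.card_le_three
  rw [hset, Set.ncard_coe_finset, ← hparity]
  generalize (({u, v, w} : Finset α).filter (f · = 1)).card = N at hle
  interval_cases N <;> decide

section PolarForm

variable {n : ℕ}

def Bf (y z : Wsp n) : ZMod 2 := y.2 z.1 + z.2 y.1

lemma Qf_add (y z : Wsp n) : Qf (y + z) = Qf y + Qf z + Bf y z := by
  simp only [Qf, Bf, Prod.fst_add, Prod.snd_add, LinearMap.add_apply, map_add]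
  ring

lemma Bf_comm (y z : Wsp n) : Bf y z = Bf z y :=
  add_comm _ _

lemma Bf_self (y : Wsp n) : Bf y y = 0 :=
  CharTwo.add_self_eq_zero _

lemma Bf_add_right (y z₁ z₂ : Wsp n) : Bf y (z₁ + z₂) = Bf y z₁ + Bf y z₂ := by
  simp only [Bf, Prod.fst_add, Prod.snd_add, LinearMap.add_apply, map_add]
  ring

lemma Bf_zero_right (y : Wsp n) : Bf y 0 = 0 := by
  simp [Bf]

lemma Qf_add_of_Qf_eq_one {y z : Wsp n} (hy : Qf y = 1) (hz : Qf z = 1) :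
    Qf (y + z) = Bf y z := by
  rw [Qf_add, hy, hz, CharTwo.add_self_eq_zero, zero_add]

lemma exists_Qf_eq_one_Bf_eq_one (hn : 2 ≤ n) {s : Wsp n} (hs : s ≠ 0) :
    ∃ z : Wsp n, Qf z = 1 ∧ Bf z s = 1 := by
  obtain ⟨a, φ⟩ := s
  by_cases ha : a = 0
  · subst ha
    obtain ⟨x, hx⟩ : ∃ x, φ x ≠ 0 :=
      DFunLike.ne_iff.mp fun h => hs (Prod.ext rfl h)
    have hx0 : x ≠ 0 := fun h => hx (h ▸ map_zero φ)
    obtain ⟨i, hi⟩ := Function.ne_iff.mp hx0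
    refine ⟨(x, LinearMap.proj i), Fin.eq_one_of_ne_zero _ hi, ?_⟩
    have hx1 : φ x = 1 := Fin.eq_one_of_ne_zero _ hx
    simp [Bf, hx1]
  · obtain ⟨i, hi⟩ := Function.ne_iff.mp ha
    have hi1 : a i = 1 := Fin.eq_one_of_ne_zero _ hi
    have := Fin.nontrivial_iff_two_le.mpr hn
    obtain ⟨j, hji⟩ := exists_ne i
    -- `c` is chosen so that `Bf z (a, φ) = a j + c * a i + φ (single j 1) = 1`.
    set c := 1 + a j + φ (Pi.single j 1)
    refine ⟨(Pi.single j 1, LinearMap.proj j + c • LinearMap.proj i), ?_, ?_⟩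
    · simp [Qf, hji.symm]
    · simp only [Bf, LinearMap.add_apply, LinearMap.coe_proj, Function.eval,
        LinearMap.smul_apply, hi1, smul_eq_mul, mul_one, c]
      grind

end PolarForm

theorem stmt17 {n : ℕ} (hn : 3 ≤ n) (u v w : Wsp n)
    (huv : u ≠ v) (huw : u ≠ w) (hvw : v ≠ w)
    (hu : Qf u = 1) (hv : Qf v = 1) (hw : Qf w = 1)
    (auv : Qf (u + v) = 1) (auw : Qf (u + w) = 1) (avw : Qf (v + w) = 1) :
    w = u + v ↔
      ∀ z : Wsp n, Qf z = 1 → z ∉ ({u, v, w} : Set (Wsp n)) →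
        ({a ∈ ({u, v, w} : Set (Wsp n)) | Qf (z + a) = 1}).ncard = 2 ∨
        ({a ∈ ({u, v, w} : Set (Wsp n)) | Qf (z + a) = 1}).ncard = 0 := by
  have hcount : ∀ z, Qf z = 1 →
      ((({a ∈ ({u, v, w} : Set (Wsp n)) | Qf (z + a) = 1}).ncard = 2 ∨
        ({a ∈ ({u, v, w} : Set (Wsp n)) | Qf (z + a) = 1}).ncard = 0) ↔
      Bf z (u + v + w) = 0) := fun z hz => by
    rw [ncard_sep_triple_eq_two_or_zero_iff huv huw hvw, Qf_add_of_Qf_eq_one hz hu,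
      Qf_add_of_Qf_eq_one hz hv, Qf_add_of_Qf_eq_one hz hw, Bf_add_right, Bf_add_right]
  constructor
  · rintro rfl z hz -
    rw [hcount z hz, ZModModule.add_self, Bf_zero_right]
  · intro H
    by_contra hne
    have hs : u + v + w ≠ 0 := fun h =>
      hne ((eq_neg_of_add_eq_zero_right h).trans (ZModModule.neg_eq_self _))
    obtain ⟨z, hz, hzs⟩ := exists_Qf_eq_one_Bf_eq_one (by omega) hs
    have hBuv : Bf u v = 1 := (Qf_add_of_Qf_eq_one hu hv).symm.trans auv
    have hBuw : Bf u w = 1 := (Qf_add_of_Qf_eq_one hu hw).symm.trans auw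
    have hBvw : Bf v w = 1 := (Qf_add_of_Qf_eq_one hv hw).symm.trans avw
    have hzuvw : z ∉ ({u, v, w} : Set (Wsp n)) := by
      rintro (rfl | rfl | rfl) <;> rw [Bf_add_right, Bf_add_right, Bf_self] at hzs
      · rw [hBuv, hBuw] at hzs
        exact absurd hzs (by decide)
      · rw [Bf_comm z u, hBuv, hBvw] at hzs
        exact absurd hzs (by decide)
      · rw [Bf_comm z u, Bf_comm z v, hBuw, hBvw] at hzs
        exact absurd hzs (by decide)
    exact one_ne_zero (hzs.symm.trans ((hcount z hz).mp (H z hz hzuvw)))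
end
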